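/- arXiv:2005.03098 — 11 statements merged into one kernel-verified Lean document; each statement's English description precedes it below -/
import Mathlib

section
/- In ℝ², for any finite set A of vectors there exists a finite set B with |B| ≤ 2 such that B is obtained from A by repeatedly removing options u for which there exists v ∈ A with v ≠ u and u ≤ μ·v for some μ ≥ 0. Concretely: any finite subset A of ℝ² with |A| ≥ 3 contains an option u and a distinct option v ∈ A with u ≤ μ·v for some real μ ≥ 0 (componentwise order). -/
private lemma quad_lemB (u v : ℝ × ℝ) (hu1 : 0 < u.1) (hv1 : 0 < v.1) (hv2 : v.2 ≤ 0)
    (h : u.2 * v.1 ≤ u.1 * v.2) : ∃ μ : ℝ, 0 ≤ μ ∧ u ≤ μ • v := by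
  refine ⟨u.1 / v.1, by positivity, ?_⟩
  rw [Prod.le_def]
  constructor
  · simp only [Prod.smul_fst, smul_eq_mul]
    rw [div_mul_cancel₀ _ (ne_of_gt hv1)]
  · simp only [Prod.smul_snd, smul_eq_mul]
    rw [div_mul_eq_mul_div, le_div_iff₀ hv1]
    linarith

private lemma quad_lemC (u v : ℝ × ℝ) (hu2 : 0 < u.2) (hv2 : 0 < v.2) (hv1 : v.1 ≤ 0)
    (h : u.1 * v.2 ≤ u.2 * v.1) : ∃ μ : ℝ, 0 ≤ μ ∧ u ≤ μ • v := by
  refine ⟨u.2 / v.2, by positivity, ?_⟩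
  rw [Prod.le_def]
  constructor
  · simp only [Prod.smul_fst, smul_eq_mul]
    rw [div_mul_eq_mul_div, le_div_iff₀ hv2]
    linarith
  · simp only [Prod.smul_snd, smul_eq_mul]
    rw [div_mul_cancel₀ _ (ne_of_gt hv2)]

private lemma quad_pos (u v : ℝ × ℝ) (hv1 : 0 < v.1) (hv2 : 0 < v.2) :
    ∃ μ : ℝ, 0 ≤ μ ∧ u ≤ μ • v := by
  refine ⟨max (u.1 / v.1) (max (u.2 / v.2) 0), ?_, ?_⟩
  · exact le_max_of_le_right (le_max_right _ _)
  rw [Prod.le_def]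
  constructor
  · simp only [Prod.smul_fst, smul_eq_mul]
    calc u.1 = (u.1 / v.1) * v.1 := by rw [div_mul_cancel₀ _ (ne_of_gt hv1)]
    _ ≤ _ := by
        apply mul_le_mul_of_nonneg_right (le_max_left _ _) (le_of_lt hv1)
  · simp only [Prod.smul_snd, smul_eq_mul]
    calc u.2 = (u.2 / v.2) * v.2 := by rw [div_mul_cancel₀ _ (ne_of_gt hv2)]
    _ ≤ _ := by
        apply mul_le_mul_of_nonneg_right _ (le_of_lt hv2)
        exact le_max_of_le_right (le_max_left _ _)

private lemma quad_neg (u v : ℝ × ℝ) (hu1 : u.1 ≤ 0) (hu2 : u.2 ≤ 0) :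
    ∃ μ : ℝ, 0 ≤ μ ∧ u ≤ μ • v := by
  refine ⟨0, le_refl _, ?_⟩
  rw [zero_smul, Prod.le_def]
  exact ⟨hu1, hu2⟩

/-- In ℝ², any finite set with at least three elements contains an option `u` and a
distinct option `v` such that `u ≤ μ • v` for some nonnegative real `μ`
(componentwise order); hence assessments in ℝ² reduce to option sets of size ≤ 2. -/
theorem stmt_4 (A : Finset (ℝ × ℝ)) (hA : 3 ≤ A.card) :
    ∃ u ∈ A, ∃ v ∈ A, v ≠ u ∧ ∃ μ : ℝ, 0 ≤ μ ∧ u ≤ μ • v := by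
  have hone : 1 < A.card := by omega
  -- Case 1: some element in the nonpositive quadrant
  by_cases hneg : ∃ u ∈ A, u.1 ≤ 0 ∧ u.2 ≤ 0
  · obtain ⟨u, hu, hu1, hu2⟩ := hneg
    obtain ⟨v, hv, hvu⟩ := Finset.exists_mem_ne hone u
    exact ⟨u, hu, v, hv, hvu, quad_neg u v hu1 hu2⟩
  -- Case 2: some element in the strictly positive quadrant
  by_cases hpos : ∃ v ∈ A, 0 < v.1 ∧ 0 < v.2
  · obtain ⟨v, hv, hv1, hv2⟩ := hpos
    obtain ⟨u, hu, huv⟩ := Finset.exists_mem_ne hone v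
    exact ⟨u, hu, v, hv, huv.symm, quad_pos u v hv1 hv2⟩
  -- Case 3: every element is in class B (x>0, y≤0) or class C (x≤0, y>0)
  push_neg at hneg hpos
  have hclass : ∀ w ∈ A, (0 < w.1 ∧ w.2 ≤ 0) ∨ (w.1 ≤ 0 ∧ 0 < w.2) := by
    intro w hw
    rcases le_or_gt w.1 0 with h1 | h1
    · exact Or.inr ⟨h1, hneg w hw h1⟩
    · exact Or.inl ⟨h1, hpos w hw h1⟩
  have sameB : ∀ u ∈ A, ∀ v ∈ A, u ≠ v → (0 < u.1 ∧ u.2 ≤ 0) → (0 < v.1 ∧ v.2 ≤ 0) →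
      ∃ u ∈ A, ∃ v ∈ A, v ≠ u ∧ ∃ μ : ℝ, 0 ≤ μ ∧ u ≤ μ • v := by
    intro u hu v hv huv ⟨hu1, hu2⟩ ⟨hv1, hv2⟩
    rcases le_total (u.2 * v.1) (u.1 * v.2) with h | h
    · exact ⟨u, hu, v, hv, huv.symm, quad_lemB u v hu1 hv1 hv2 h⟩
    · exact ⟨v, hv, u, hu, huv, quad_lemB v u hv1 hu1 hu2 (by linarith)⟩
  have sameC : ∀ u ∈ A, ∀ v ∈ A, u ≠ v → (u.1 ≤ 0 ∧ 0 < u.2) → (v.1 ≤ 0 ∧ 0 < v.2) →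
      ∃ u ∈ A, ∃ v ∈ A, v ≠ u ∧ ∃ μ : ℝ, 0 ≤ μ ∧ u ≤ μ • v := by
    intro u hu v hv huv ⟨hu1, hu2⟩ ⟨hv1, hv2⟩
    rcases le_total (u.1 * v.2) (u.2 * v.1) with h | h
    · exact ⟨u, hu, v, hv, huv.symm, quad_lemC u v hu2 hv2 hv1 h⟩
    · exact ⟨v, hv, u, hu, huv, quad_lemC v u hv2 hu2 hu1 (by linarith)⟩
  obtain ⟨a, b, c, ha, hb, hc, hab, hac, hbc⟩ := Finset.two_lt_card_iff.mp (show 2 < A.card by omega)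
  rcases hclass a ha with hA1 | hA1 <;> rcases hclass b hb with hB1 | hB1 <;>
    rcases hclass c hc with hC1 | hC1
  · exact sameB a ha b hb hab hA1 hB1
  · exact sameB a ha b hb hab hA1 hB1
  · exact sameB a ha c hc hac hA1 hC1
  · exact sameC b hb c hc hbc hB1 hC1
  · exact sameB b hb c hc hbc hB1 hC1
  · exact sameC a ha c hc hac hA1 hC1
  · exact sameC a ha b hb hab hA1 hB1
  · exact sameC a ha b hb hab hA1 hB1
end

section
/- Let K be a coherent set of desirable option sets and A, B disjoint finite option sets. Then ((A ∪ B) − u) ∈ K for all u ∈ A if and only if (B − u) ∈ K for all u ∈ A. (Here A − u = {v − u : v ∈ A}.) -/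
open scoped BigOperators

variable {X : Type*}

/-- The shifted option set `A - u = {v - u : v ∈ A}`. -/
def shift {X : Type*} (A : Set (X → ℝ)) (u : X → ℝ) : Set (X → ℝ) :=
  (fun v => v - u) '' A

/-- Coherence of a set of desirable option sets (axioms K0–K4, plus K ⊆ Q). -/
def CoherentK {X : Type*} (K : Set (Set (X → ℝ))) : Prop :=
  (∀ A ∈ K, A.Finite) ∧
  (∀ A ∈ K, A \ {0} ∈ K) ∧
  ({(0 : X → ℝ)} ∉ K) ∧
  (∀ u : X → ℝ, 0 < u → {u} ∈ K) ∧
  (∀ A ∈ K, ∀ B ∈ K, ∀ l : (X → ℝ) → (X → ℝ) → ℝ × ℝ,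
    (∀ a ∈ A, ∀ b ∈ B, 0 ≤ (l a b).1 ∧ 0 ≤ (l a b).2 ∧ 0 < (l a b).1 + (l a b).2) →
    {w | ∃ a ∈ A, ∃ b ∈ B, w = (l a b).1 • a + (l a b).2 • b} ∈ K) ∧
  (∀ A ∈ K, ∀ B : Set (X → ℝ), B.Finite → A ∪ B ∈ K)

/-- The set of desirable option sets associated with a choice function. -/
def KC {X : Type*} (C : Set (X → ℝ) → Set (X → ℝ)) : Set (Set (X → ℝ)) :=
  {A | A.Finite ∧ (0 : X → ℝ) ∉ C (A ∪ {0})}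

/-- The choice function associated with a set of desirable option sets. -/
def CK {X : Type*} (K : Set (Set (X → ℝ))) : Set (X → ℝ) → Set (X → ℝ) :=
  fun A => {u | u ∈ A ∧ shift A u \ {0} ∉ K}

/-- Coherence of a choice function (C0–C4, plus C(A) ⊆ A). -/
def CoherentC {X : Type*} (C : Set (X → ℝ) → Set (X → ℝ)) : Prop :=
  (∀ A, C A ⊆ A) ∧
  (∀ A : Set (X → ℝ), A.Finite → A ≠ ∅ → C A ≠ ∅) ∧
  (∀ A : Set (X → ℝ), A.Finite → ∀ u ∈ A, (u ∈ C A ↔ (0 : X → ℝ) ∈ C (shift A u))) ∧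
  (∀ u : X → ℝ, 0 < u → {u} ∈ KC C) ∧
  (∀ A ∈ KC C, ∀ B ∈ KC C, ∀ l : (X → ℝ) → (X → ℝ) → ℝ × ℝ,
    (∀ a ∈ A, ∀ b ∈ B, 0 ≤ (l a b).1 ∧ 0 ≤ (l a b).2 ∧ 0 < (l a b).1 + (l a b).2) →
    {w | ∃ a ∈ A, ∃ b ∈ B, w = (l a b).1 • a + (l a b).2 • b} ∈ KC C) ∧
  (∀ A B : Set (X → ℝ), A.Finite → B.Finite → A ⊆ B → A \ C A ⊆ B \ C B)

/-- The assessment associated with a choice function. -/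
def AC {X : Type*} (C : Set (X → ℝ) → Set (X → ℝ)) : Set (Set (X → ℝ)) :=
  {B | ∃ A : Set (X → ℝ), A.Finite ∧ ∃ u ∈ A \ C A, B = shift (C A) u}

/-- The natural extension of an assessment: intersection of all coherent sets of
desirable option sets containing it, with the convention ⋂ ∅ = Q. -/
def ExA {X : Type*} (𝒜 : Set (Set (X → ℝ))) : Set (Set (X → ℝ)) :=
  {S | S.Finite ∧ ∀ K : Set (Set (X → ℝ)), CoherentK K → 𝒜 ⊆ K → S ∈ K}

lemma zero_not_mem_shift {X : Type*} {B : Set (X → ℝ)} {u : X → ℝ} (h : u ∉ B) :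
    (0 : X → ℝ) ∉ shift B u := by
  rintro ⟨x, hx, hx0⟩
  exact h (by rwa [sub_eq_zero.mp hx0] at hx)

lemma stmt6_aux {X : Type*} (K : Set (Set (X → ℝ))) (hK : CoherentK K) :
    ∀ n : ℕ, ∀ A B : Set (X → ℝ), A.Finite → B.Finite → A.ncard = n →
      Disjoint A B → (∀ u ∈ A, shift (A ∪ B) u ∈ K) → ∀ u ∈ A, shift B u ∈ K := by
  obtain ⟨hfin, hK0, hK1, hK2, hK3, hK4⟩ := hK
  classical
  intro n
  induction n with
  | zero =>
    intro A B hA hB hcard hdisj h u hu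
    have hAe : A = ∅ := (Set.ncard_eq_zero hA).mp hcard
    simp [hAe] at hu
  | succ n ih =>
    intro A B hA hB hcard hdisj h u hu
    have huB : u ∉ B := Set.disjoint_left.mp hdisj hu
    by_cases hsing : ∃ v ∈ A, v ≠ u
    · obtain ⟨v, hvA, hvu⟩ := hsing
      have hvB : v ∉ B := Set.disjoint_left.mp hdisj hvA
      -- apply IH to (A \ {v}, B ∪ {v}) at u
      have hcard1 : (A \ {v}).ncard = n := by
        rw [Set.ncard_diff_singleton_of_mem hvA, hcard]; omega
      have hcard2 : (A \ {u}).ncard = n := by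
        rw [Set.ncard_diff_singleton_of_mem hu, hcard]; omega
      have hunion1 : (A \ {v}) ∪ (B ∪ {v}) = A ∪ B := by
        ext x
        by_cases hx : x = v <;> simp [hx, hvA]
      have hunion2 : (A \ {u}) ∪ (B ∪ {u}) = A ∪ B := by
        ext x
        by_cases hx : x = u <;> simp [hx, hu]
      have hdisj1 : Disjoint (A \ {v}) (B ∪ {v}) := by
        rw [Set.disjoint_union_right]
        exact ⟨hdisj.mono_left Set.diff_subset,
          Set.disjoint_singleton_right.mpr (by simp)⟩
      have hdisj2 : Disjoint (A \ {u}) (B ∪ {u}) := by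
        rw [Set.disjoint_union_right]
        exact ⟨hdisj.mono_left Set.diff_subset,
          Set.disjoint_singleton_right.mpr (by simp)⟩
      have hE : shift (B ∪ {v}) u ∈ K := by
        refine ih (A \ {v}) (B ∪ {v}) hA.diff (hB.union (Set.finite_singleton v))
          hcard1 hdisj1 ?_ u ⟨hu, by simpa using Ne.symm hvu⟩
        intro w hw
        rw [hunion1]
        exact h w hw.1
      have hF : shift (B ∪ {u}) v ∈ K := by
        refine ih (A \ {u}) (B ∪ {u}) hA.diff (hB.union (Set.finite_singleton u))
          hcard2 hdisj2 ?_ v ⟨hvA, by simpa using hvu⟩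
        intro w hw
        rw [hunion2]
        exact h w hw.1
      -- combine via K3
      set l : (X → ℝ) → (X → ℝ) → ℝ × ℝ :=
        fun a _ => if a = v - u then (1, 1) else (1, 0) with hl
      have hlpos : ∀ a ∈ shift (B ∪ {v}) u, ∀ b ∈ shift (B ∪ {u}) v,
          0 ≤ (l a b).1 ∧ 0 ≤ (l a b).2 ∧ 0 < (l a b).1 + (l a b).2 := by
        intro a _ b _
        by_cases hav : a = v - u <;> simp [hl, hav]
      have hR : {w | ∃ a ∈ shift (B ∪ {v}) u, ∃ b ∈ shift (B ∪ {u}) v,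
          w = (l a b).1 • a + (l a b).2 • b} ∈ K :=
        hK3 _ hE _ hF l hlpos
      have hR0 := hK0 _ hR
      have heq : {w | ∃ a ∈ shift (B ∪ {v}) u, ∃ b ∈ shift (B ∪ {u}) v,
          w = (l a b).1 • a + (l a b).2 • b} \ {0} = shift B u := by
        ext w
        constructor
        · rintro ⟨⟨a, ⟨x, hx, rfl⟩, b, ⟨y, hy, rfl⟩, rfl⟩, hw0⟩
          by_cases hav : x - u = v - u
          · -- a = v - u; result is y - u
            have hxv : x = v := sub_left_inj.mp hav
            rcases hy with hy | hy
            · refine ⟨y, hy, ?_⟩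
              simp only [hl, hav, if_pos, one_smul, hxv]
              abel
            · exfalso
              apply hw0
              rw [Set.mem_singleton_iff] at hy
              subst hy hxv
              simp only [Set.mem_singleton_iff, hl, if_pos, one_smul]
              abel
          · rcases hx with hx | hx
            · exact ⟨x, hx, by simp [hl, hav]⟩
            · exact absurd (by rw [hx]) hav
        · rintro ⟨x, hx, rfl⟩
          have hxv : x - u ≠ v - u := fun hc => hvB (sub_left_inj.mp hc ▸ hx)
          refine ⟨⟨x - u, ⟨x, Or.inl hx, rfl⟩, u - v, ⟨u, Or.inr rfl, rfl⟩,
            by simp [hl, hxv]⟩, ?_⟩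
          simp only [Set.mem_singleton_iff]
          intro hc
          exact huB (sub_eq_zero.mp hc ▸ hx)
      rwa [heq] at hR0
    · -- A = {u}
      push_neg at hsing
      have hAu : A = {u} := Set.eq_singleton_iff_unique_mem.mpr ⟨hu, hsing⟩
      have h1 : shift (A ∪ B) u ∈ K := h u hu
      have h0 := hK0 _ h1
      have heq : shift (A ∪ B) u \ {0} = shift B u := by
        rw [hAu]
        unfold shift
        rw [Set.image_union, Set.image_singleton, sub_self]
        ext w
        constructor
        · rintro ⟨hw, hw0⟩
          rcases hw with hw | hw
          · exact absurd hw hw0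
          · exact hw
        · intro hw
          exact ⟨Or.inr hw, fun hc => zero_not_mem_shift huB (Set.mem_singleton_iff.mp hc ▸ hw)⟩
      rwa [heq] at h0

/-- For a coherent set of desirable option sets K and disjoint finite option sets A, B:
(A ∪ B) − u ∈ K for all u ∈ A iff B − u ∈ K for all u ∈ A. -/
theorem stmt_6 {X : Type*} (K : Set (Set (X → ℝ))) (hK : CoherentK K)
    (A B : Set (X → ℝ)) (hA : A.Finite) (hB : B.Finite) (hdisj : Disjoint A B) :
    (∀ u ∈ A, shift (A ∪ B) u ∈ K) ↔ (∀ u ∈ A, shift B u ∈ K) := by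
  constructor
  · intro h
    exact stmt6_aux K hK A.ncard A B hA hB rfl hdisj h
  · intro h u hu
    have h4 := hK.2.2.2.2.2 _ (h u hu) (shift A u) (hA.image _)
    have heq : shift B u ∪ shift A u = shift (A ∪ B) u := by
      unfold shift
      rw [Set.image_union, Set.union_comm]
    rwa [heq] at h4
end

section
/- For a choice function C and a coherent choice function C', one has C'(A) ⊆ C(A) for all finite A if and only if A_C ⊆ K_{C'}, where A_C = {C(A) − u : A finite, u ∈ R_C(A)} and K_{C'} = {B : 0 ∉ C'(B ∪ {0})}. -/
open scoped BigOperators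

variable {X : Type*}

lemma zero_mem_shift {A : Set (X → ℝ)} {u : X → ℝ} (hu : u ∈ A) : (0 : X → ℝ) ∈ shift A u :=
  ⟨u, hu, sub_self u⟩
lemma shift_finite {A : Set (X → ℝ)} (hA : A.Finite) (u : X → ℝ) : (shift A u).Finite :=
  hA.image _
lemma shift_union_zero {A : Set (X → ℝ)} {u : X → ℝ} (hu : u ∈ A) :
    shift A u ∪ {0} = shift A u :=
  Set.union_eq_self_of_subset_right (Set.singleton_subset_iff.mpr (zero_mem_shift hu))
lemma kc_mono {C' : Set (X → ℝ) → Set (X → ℝ)} (hC' : CoherentC C')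
    {S T : Set (X → ℝ)} (hS : S ∈ KC C') (hT : T.Finite) (hsub : S ⊆ T) : T ∈ KC C' := by
  refine ⟨hT, ?_⟩
  have h5 := hC'.2.2.2.2.2 (S ∪ {0}) (T ∪ {0}) (hS.1.union (Set.finite_singleton _))
    (hT.union (Set.finite_singleton _)) (Set.union_subset_union_left _ hsub)
  have : (0 : X → ℝ) ∈ (S ∪ {0}) \ C' (S ∪ {0}) :=
    ⟨Set.mem_union_right _ rfl, hS.2⟩
  exact (h5 this).2

/-- rejection reformulated via KC -/
lemma reject_iff {C' : Set (X → ℝ) → Set (X → ℝ)} (hC' : CoherentC C')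
    {A : Set (X → ℝ)} (hA : A.Finite) {u : X → ℝ} (hu : u ∈ A) :
    u ∉ C' A ↔ shift A u ∈ KC C' := by
  rw [hC'.2.2.1 A hA u hu]
  constructor
  · intro h; exact ⟨shift_finite hA u, by rwa [shift_union_zero hu]⟩
  · intro h; have := h.2; rwa [shift_union_zero hu] at this

/-- Single removal: a rejected option stays rejected after removing another rejected option. -/
lemma single_removal {C' : Set (X → ℝ) → Set (X → ℝ)} (hC' : CoherentC C')
    {A : Set (X → ℝ)} (hA : A.Finite) {z w : X → ℝ} (hz : z ∈ A) (hw : w ∈ A)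
    (hzw : z ≠ w) (hzr : z ∉ C' A) (hwr : w ∉ C' A) : w ∉ C' (A \ {z}) := by
  classical
  have hB1 : shift A w ∈ KC C' := (reject_iff hC' hA hw).mp hwr
  have hB2' : shift A z ∈ KC C' := (reject_iff hC' hA hz).mp hzr
  have hB2 : shift A z \ {0} ∈ KC C' := by
    refine ⟨hB2'.1.diff, ?_⟩
    have heq : (shift A z \ {0}) ∪ {0} = shift A z := by
      rw [Set.diff_union_self]; exact shift_union_zero hz
    rw [heq]
    have := hB2'.2
    rwa [shift_union_zero hz] at this
  set l : (X → ℝ) → (X → ℝ) → ℝ × ℝ :=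
    fun a _ => if a = z - w then ((1:ℝ), (1:ℝ)) else ((1:ℝ), (0:ℝ)) with hl
  have hcoef : ∀ a ∈ shift A w, ∀ b ∈ shift A z \ {0},
      0 ≤ (l a b).1 ∧ 0 ≤ (l a b).2 ∧ 0 < (l a b).1 + (l a b).2 := by
    intro a _ b _
    simp only [hl]
    split_ifs <;> norm_num
  have hW := hC'.2.2.2.2.1 (shift A w) hB1 (shift A z \ {0}) hB2 l hcoef
  -- W ⊆ shift (A \ {z}) w ∪ {0}
  have hWsub : {v | ∃ a ∈ shift A w, ∃ b ∈ shift A z \ {0},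
      v = (l a b).1 • a + (l a b).2 • b} ⊆ shift (A \ {z}) w ∪ {0} := by
    rintro v ⟨a, ⟨x, hx, rfl⟩, b, ⟨⟨y, hy, rfl⟩, hb0⟩, rfl⟩
    have hyz : y ≠ z := by
      intro h; apply hb0; simp [h]
    by_cases hxz : x - w = z - w
    · have hxz' : x = z := by
        have := congrArg (· + w) hxz; simpa using this
      simp only [hl, if_pos hxz]
      have : (1:ℝ) • (x - w) + (1:ℝ) • (y - z) = y - w := by
        rw [hxz']; module
      rw [this]
      by_cases hyw : y = w
      · right; simp [hyw]
      · left; exact ⟨y, ⟨hy, hyz⟩, rfl⟩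
    · simp only [hl, if_neg hxz]
      have : (1:ℝ) • (x - w) + (0:ℝ) • (y - z) = x - w := by module
      rw [this]
      left
      refine ⟨x, ⟨hx, ?_⟩, rfl⟩
      intro h; exact hxz (by rw [h])
  have hT : (shift (A \ {z}) w ∪ {0}).Finite :=
    (shift_finite (hA.diff) w).union (Set.finite_singleton _)
  have hfin : shift (A \ {z}) w ∪ {0} ∈ KC C' := kc_mono hC' hW hT hWsub
  have hwz : w ∈ A \ {z} := ⟨hw, fun h => hzw (Set.mem_singleton_iff.mp h).symm⟩
  have heq : shift (A \ {z}) w ∪ {0} = shift (A \ {z}) w := shift_union_zero hwz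
  rw [heq] at hfin
  exact (reject_iff hC' (hA.diff) hwz).mpr hfin

/-- Aizerman property: if C'(A) ⊆ E ⊆ A, rejection from A implies rejection from E. -/
lemma aizerman {C' : Set (X → ℝ) → Set (X → ℝ)} (hC' : CoherentC C') :
    ∀ n : ℕ, ∀ A E : Set (X → ℝ), A.Finite → C' A ⊆ E → E ⊆ A → (A \ E).ncard ≤ n →
      ∀ u ∈ E, u ∉ C' A → u ∉ C' E := by
  intro n
  induction n with
  | zero =>
    intro A E hA hCE hEA hcard u hu hur
    have hdf : (A \ E).Finite := hA.diff
    have : A \ E = ∅ := by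
      rw [← Set.ncard_eq_zero hdf]; omega
    have hEeq : E = A := Set.Subset.antisymm hEA (Set.diff_eq_empty.mp this)
    rwa [hEeq]
  | succ n ih =>
    intro A E hA hCE hEA hcard u hu hur
    by_cases hAE : A \ E = ∅
    · have hEeq : E = A := Set.Subset.antisymm hEA (Set.diff_eq_empty.mp hAE)
      rwa [hEeq]
    · obtain ⟨z, hzA, hzE⟩ := Set.nonempty_iff_ne_empty.mpr hAE
      have hzr : z ∉ C' A := fun h => hzE (hCE h)
      set A₁ := A \ {z} with hA₁
      have hA₁fin : A₁.Finite := hA.diff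
      have hEA₁ : E ⊆ A₁ := fun x hx => ⟨hEA hx, fun h => hzE ((Set.mem_singleton_iff.mp h) ▸ hx)⟩
      have hCE₁ : C' A₁ ⊆ E := by
        intro w hw
        by_contra hwE
        have hwA : w ∈ A := (hC'.1 A₁ hw).1
        have hwr : w ∉ C' A := fun h => hwE (hCE h)
        have hwz : w ≠ z := (hC'.1 A₁ hw).2
        exact single_removal hC' hA hzA hwA (fun h => hwz h.symm) hzr hwr hw
      have hcard₁ : (A₁ \ E).ncard ≤ n := by
        have heq : A₁ \ E = (A \ E) \ {z} := by
          ext x; simp only [hA₁, Set.mem_diff, Set.mem_singleton_iff]; tauto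
        have hlt : ((A \ E) \ {z}).ncard < (A \ E).ncard :=
          Set.ncard_diff_singleton_lt_of_mem ⟨hzA, hzE⟩ (hA.diff)
        rw [heq]; omega
      have hu₁ : u ∈ A₁ := hEA₁ hu
      have hur₁ : u ∉ C' A₁ :=
        single_removal hC' hA hzA (hEA hu) (fun h => (hu₁.2 (h ▸ rfl))) hzr hur
      exact ih A₁ E hA₁fin hCE₁ hEA₁ hcard₁ u hu hur₁


/-- For a choice function C and a coherent choice function C':
C'(A) ⊆ C(A) for all finite A iff A_C ⊆ K_{C'}. -/
theorem stmt_8 {X : Type*} (C C' : Set (X → ℝ) → Set (X → ℝ))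
    (hC : ∀ A, C A ⊆ A) (hC' : CoherentC C') :
    (∀ A : Set (X → ℝ), A.Finite → C' A ⊆ C A) ↔ AC C ⊆ KC C' := by
  constructor
  · rintro h B ⟨A, hA, u, ⟨huA, huC⟩, rfl⟩
    have hsub : C' A ⊆ C A := h A hA
    have hur : u ∉ C' A := fun hx => huC (hsub hx)
    set D := C A ∪ {u} with hD
    have hDA : D ⊆ A := Set.union_subset (hC A) (Set.singleton_subset_iff.mpr huA)
    have hDfin : D.Finite := hA.subset hDA
    have hCD : C' A ⊆ D := fun x hx => Set.mem_union_left _ (hsub hx)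
    have huD : u ∈ D := Set.mem_union_right _ rfl
    have hurD : u ∉ C' D :=
      aizerman hC' (A \ D).ncard A D hA hCD hDA le_rfl u huD hur
    have h0 : (0 : X → ℝ) ∉ C' (shift D u) := by
      intro h0
      exact hurD ((hC'.2.2.1 D hDfin u huD).mpr h0)
    have heq : shift D u = shift (C A) u ∪ {0} := by
      simp only [hD, shift, Set.image_union, Set.image_singleton, sub_self]
    refine ⟨(hA.subset (hC A)).image _, ?_⟩
    rwa [← heq]
  · intro h A hA v hv
    by_contra hvC
    have hvA : v ∈ A := hC'.1 A hv
    have hB : shift (C A) v ∈ KC C' := h ⟨A, hA, v, ⟨hvA, hvC⟩, rfl⟩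
    set D := C A ∪ {v} with hD
    have hDA : D ⊆ A := Set.union_subset (hC A) (Set.singleton_subset_iff.mpr hvA)
    have hDfin : D.Finite := hA.subset hDA
    have hvD : v ∈ D := Set.mem_union_right _ rfl
    have heq : shift (C A) v ∪ {0} = shift D v := by
      simp only [hD, shift, Set.image_union, Set.image_singleton, sub_self]
    have h0 : (0 : X → ℝ) ∉ C' (shift D v) := by rw [← heq]; exact hB.2
    have hvrD : v ∉ C' D := fun hx => h0 ((hC'.2.2.1 D hDfin v hvD).mp hx)
    have := hC'.2.2.2.2.2 D A hDfin hA hDA ⟨hvD, hvrD⟩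
    exact this.2 hv
end

section
/- Every coherence axiom for choice functions is preserved under nonempty unions: if 𝒟 is a nonempty family of coherent choice functions and C* is defined by C*(A) = ⋃_{C ∈ 𝒟} C(A), then C* is coherent. In particular, R_{C*}(A) = ⋂_{C ∈ 𝒟} R_C(A) and K_{C*} = ⋂_{C ∈ 𝒟} K_C. -/
open scoped BigOperators

variable {X : Type*}

/-- Coherence of choice functions is preserved under nonempty unions; moreover the
rejection function and the set of desirable option sets of the union are the
corresponding intersections. -/
theorem stmt_9 {X : Type*} (𝒟 : Set (Set (X → ℝ) → Set (X → ℝ)))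
    (hne : 𝒟.Nonempty) (hcoh : ∀ C ∈ 𝒟, CoherentC C) :
    CoherentC (fun A => ⋃ C ∈ 𝒟, C A) ∧
    (∀ A : Set (X → ℝ), A \ (⋃ C ∈ 𝒟, C A) = ⋂ C ∈ 𝒟, (A \ C A)) ∧
    KC (fun A => ⋃ C ∈ 𝒟, C A) = ⋂ C ∈ 𝒟, KC C := by
  obtain ⟨C₀, hC₀⟩ := hne
  have hKC : KC (fun A => ⋃ C ∈ 𝒟, C A) = ⋂ C ∈ 𝒟, KC C := by
    ext A
    simp only [KC, Set.mem_setOf_eq, Set.mem_iUnion, Set.mem_iInter, exists_prop]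
    constructor
    · rintro ⟨hfin, h0⟩ C hC
      exact ⟨hfin, fun h => h0 ⟨C, hC, h⟩⟩
    · intro h
      refine ⟨(h C₀ hC₀).1, ?_⟩
      rintro ⟨C, hC, h0⟩
      exact (h C hC).2 h0
  have hR : ∀ A : Set (X → ℝ), A \ (⋃ C ∈ 𝒟, C A) = ⋂ C ∈ 𝒟, (A \ C A) := by
    intro A
    ext u
    simp only [Set.mem_diff, Set.mem_iUnion, Set.mem_iInter, not_exists, exists_prop]
    constructor
    · rintro ⟨hu, h⟩ C hC
      exact ⟨hu, fun hc => h C ⟨hC, hc⟩⟩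
    · intro h
      exact ⟨(h C₀ hC₀).1, fun C hC => (h C hC.1).2 hC.2⟩
  refine ⟨⟨?_, ?_, ?_, ?_, ?_, ?_⟩, hR, hKC⟩
  · exact fun A => Set.iUnion₂_subset fun C hC => (hcoh C hC).1 A
  · intro A hfin hne'
    have h := (hcoh C₀ hC₀).2.1 A hfin hne'
    obtain ⟨x, hx⟩ := Set.nonempty_iff_ne_empty.2 h
    exact Set.nonempty_iff_ne_empty.1 ⟨x, Set.mem_iUnion₂.2 ⟨C₀, hC₀, hx⟩⟩
  · intro A hfin u hu
    simp only [Set.mem_iUnion, exists_prop]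
    constructor
    · rintro ⟨C, hC, h⟩
      exact ⟨C, hC, ((hcoh C hC).2.2.1 A hfin u hu).1 h⟩
    · rintro ⟨C, hC, h⟩
      exact ⟨C, hC, ((hcoh C hC).2.2.1 A hfin u hu).2 h⟩
  · intro u hu
    rw [hKC]
    exact Set.mem_iInter₂.2 fun C hC => (hcoh C hC).2.2.2.1 u hu
  · intro A hA B hB l hl
    rw [hKC] at hA hB ⊢
    exact Set.mem_iInter₂.2 fun C hC =>
      (hcoh C hC).2.2.2.2.1 A (Set.mem_iInter₂.1 hA C hC) B (Set.mem_iInter₂.1 hB C hC) l hl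
  · intro A B hAf hBf hAB
    rw [hR A, hR B]
    exact Set.iInter₂_mono fun C hC => (hcoh C hC).2.2.2.2.2 A B hAf hBf hAB
end

section
/- For any choice function C: if the set 𝒞_C of coherent choice functions C' with C'(A) ⊆ C(A) for all A is nonempty, then the natural extension Ex(C), defined by Ex(C)(A) = ⋃_{C' ∈ 𝒞_C} C'(A), is itself a coherent choice function, belongs to 𝒞_C, and is the least informative element of 𝒞_C (i.e., C'(A) ⊆ Ex(C)(A) for all C' ∈ 𝒞_C and all A). If 𝒞_C is empty, then Ex(C)(A) = ∅ for all A and Ex(C) is not coherent. -/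
open scoped BigOperators

variable {X : Type*}

lemma aux_union_coherent {X : Type*} (S : Set (Set (X → ℝ) → Set (X → ℝ)))
    (hS : ∀ C' ∈ S, CoherentC C') (hne : S.Nonempty) :
    CoherentC (fun A => ⋃ C' ∈ S, C' A) := by
  obtain ⟨C₀, hC₀⟩ := hne
  have hmem : ∀ (A : Set (X → ℝ)) (u : X → ℝ),
      u ∈ (⋃ C' ∈ S, C' A) ↔ ∃ C' ∈ S, u ∈ C' A := by
    intro A u; simp
  have hKC : ∀ B : Set (X → ℝ),
      B ∈ KC (fun A => ⋃ C' ∈ S, C' A) ↔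
        B.Finite ∧ ∀ C' ∈ S, (0 : X → ℝ) ∉ C' (B ∪ {0}) := by
    intro B
    simp only [KC, Set.mem_setOf_eq, hmem]
    push_neg
    rfl
  refine ⟨?_, ?_, ?_, ?_, ?_, ?_⟩
  · intro A u hu
    obtain ⟨C', hC', hu⟩ := (hmem A u).1 hu
    exact (hS C' hC').1 A hu
  · intro A hAfin hAne hempty
    obtain ⟨u, hu⟩ := Set.nonempty_iff_ne_empty.2 ((hS C₀ hC₀).2.1 A hAfin hAne)
    have : u ∈ (⋃ C' ∈ S, C' A) := (hmem A u).2 ⟨C₀, hC₀, hu⟩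
    rw [show (fun A => ⋃ C' ∈ S, C' A) A = ⋃ C' ∈ S, C' A from rfl] at hempty
    rw [hempty] at this
    exact this
  · intro A hAfin u huA
    simp only []
    rw [hmem, hmem]
    constructor
    · rintro ⟨C', hC', hu⟩
      exact ⟨C', hC', ((hS C' hC').2.2.1 A hAfin u huA).1 hu⟩
    · rintro ⟨C', hC', hu⟩
      exact ⟨C', hC', ((hS C' hC').2.2.1 A hAfin u huA).2 hu⟩
  · intro u hu
    rw [hKC]
    exact ⟨Set.finite_singleton u, fun C' hC' => ((hS C' hC').2.2.2.1 u hu).2⟩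
  · intro A hA B hB l hl
    rw [hKC] at hA hB ⊢
    have hW : ∀ C' ∈ S,
        {w | ∃ a ∈ A, ∃ b ∈ B, w = (l a b).1 • a + (l a b).2 • b} ∈ KC C' := by
      intro C' hC'
      exact (hS C' hC').2.2.2.2.1 A ⟨hA.1, hA.2 C' hC'⟩ B ⟨hB.1, hB.2 C' hC'⟩ l hl
    exact ⟨(hW C₀ hC₀).1, fun C' hC' => (hW C' hC').2⟩
  · intro A B hAfin hBfin hAB u hu
    refine ⟨hAB hu.1, ?_⟩
    intro huB
    obtain ⟨C', hC', huB'⟩ := (hmem B u).1 huB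
    have huA : u ∈ C' A := by
      by_contra h
      exact ((hS C' hC').2.2.2.2.2 A B hAfin hBfin hAB ⟨hu.1, h⟩).2 huB'
    exact hu.2 ((hmem A u).2 ⟨C', hC', huA⟩)

/-- Natural extension of a choice function: if the set 𝒞_C of coherent choice functions
dominated by C is nonempty, then Ex(C) = ⋃_{C' ∈ 𝒞_C} C' is coherent, belongs to 𝒞_C,
and is its least informative element; otherwise Ex(C) is empty-valued and incoherent. -/
theorem stmt_10 {X : Type*} (C : Set (X → ℝ) → Set (X → ℝ)) (hC : ∀ A, C A ⊆ A) :
    (({C' | CoherentC C' ∧ ∀ A : Set (X → ℝ), A.Finite → C' A ⊆ C A} :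
        Set (Set (X → ℝ) → Set (X → ℝ))).Nonempty →
      (CoherentC (fun A => ⋃ C' ∈ {C' | CoherentC C' ∧ ∀ A : Set (X → ℝ), A.Finite → C' A ⊆ C A}, C' A) ∧
       (fun A => ⋃ C' ∈ {C' | CoherentC C' ∧ ∀ A : Set (X → ℝ), A.Finite → C' A ⊆ C A}, C' A) ∈
         {C' | CoherentC C' ∧ ∀ A : Set (X → ℝ), A.Finite → C' A ⊆ C A} ∧
       (∀ C' ∈ {C' | CoherentC C' ∧ ∀ A : Set (X → ℝ), A.Finite → C' A ⊆ C A},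
         ∀ A : Set (X → ℝ),
           C' A ⊆ ⋃ C'' ∈ {C' | CoherentC C' ∧ ∀ A : Set (X → ℝ), A.Finite → C' A ⊆ C A}, C'' A))) ∧
    (¬ ({C' | CoherentC C' ∧ ∀ A : Set (X → ℝ), A.Finite → C' A ⊆ C A} :
        Set (Set (X → ℝ) → Set (X → ℝ))).Nonempty →
      ((∀ A : Set (X → ℝ),
          (⋃ C' ∈ {C' | CoherentC C' ∧ ∀ A : Set (X → ℝ), A.Finite → C' A ⊆ C A}, C' A) = ∅) ∧
       ¬ CoherentC (fun A => ⋃ C' ∈ {C' | CoherentC C' ∧ ∀ A : Set (X → ℝ), A.Finite → C' A ⊆ C A}, C' A))) := by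

  have hSco : ∀ C' ∈ {C' | CoherentC C' ∧ ∀ A : Set (X → ℝ), A.Finite → C' A ⊆ C A},
      CoherentC C' := fun C' h => h.1
  constructor
  · intro hne
    have hcoh := aux_union_coherent _ hSco hne
    refine ⟨hcoh, ⟨hcoh, ?_⟩, ?_⟩
    · intro A hAfin u hu
      simp only [Set.mem_iUnion] at hu
      obtain ⟨C', hC', hu⟩ := hu
      exact hC'.2 A hAfin hu
    · intro C' hC' A u hu
      simp only [Set.mem_iUnion]
      exact ⟨C', hC', hu⟩
  · intro hne
    have hS : {C' | CoherentC C' ∧ ∀ A : Set (X → ℝ), A.Finite → C' A ⊆ C A}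
        = (∅ : Set (Set (X → ℝ) → Set (X → ℝ))) := Set.not_nonempty_iff_eq_empty.1 hne
    have hempty : ∀ A : Set (X → ℝ),
        (⋃ C' ∈ {C' | CoherentC C' ∧ ∀ A : Set (X → ℝ), A.Finite → C' A ⊆ C A}, C' A) = ∅ := by
      intro A; rw [hS]; simp
    refine ⟨hempty, ?_⟩
    intro hcoh
    exact hcoh.2.1 {0} (Set.finite_singleton 0) (Set.singleton_ne_empty 0) (hempty {0})
end

section
/- For any assessment 𝒜 ⊆ Q, the following are equivalent: (1) there exists a coherent set of desirable option sets K with 𝒜 ⊆ K (consistency); (2) Ex(𝒜) := ⋂{K coherent : 𝒜 ⊆ K} is coherent; (3) ∅ ∉ Ex(𝒜). (By convention the empty intersection equals Q.) -/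
open scoped BigOperators

variable {X : Type*}

/-- For an assessment 𝒜 ⊆ Q: consistency (existence of a coherent superset),
coherence of the natural extension Ex(𝒜), and ∅ ∉ Ex(𝒜) are equivalent. -/
theorem stmt_11 {X : Type*} (𝒜 : Set (Set (X → ℝ))) (h𝒜 : ∀ A ∈ 𝒜, A.Finite) :
    ((∃ K : Set (Set (X → ℝ)), CoherentK K ∧ 𝒜 ⊆ K) ↔ CoherentK (ExA 𝒜)) ∧
    ((∃ K : Set (Set (X → ℝ)), CoherentK K ∧ 𝒜 ⊆ K) ↔ (∅ : Set (X → ℝ)) ∉ ExA 𝒜) := by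
  have h1 : (∃ K : Set (Set (X → ℝ)), CoherentK K ∧ 𝒜 ⊆ K) → CoherentK (ExA 𝒜) := by
    rintro ⟨K₀, hK₀, hsub₀⟩
    refine ⟨fun A hA => hA.1, ?_, ?_, ?_, ?_, ?_⟩
    · rintro A ⟨hAfin, hA⟩
      exact ⟨hAfin.subset (Set.diff_subset), fun K hK hs => hK.2.1 A (hA K hK hs)⟩
    · intro h
      exact hK₀.2.2.1 (h.2 K₀ hK₀ hsub₀)
    · intro u hu
      exact ⟨Set.finite_singleton u, fun K hK _ => hK.2.2.2.1 u hu⟩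
    · rintro A ⟨hAfin, hA⟩ B ⟨hBfin, hB⟩ l hl
      refine ⟨?_, fun K hK hs => hK.2.2.2.2.1 A (hA K hK hs) B (hB K hK hs) l hl⟩
      have : {w | ∃ a ∈ A, ∃ b ∈ B, w = (l a b).1 • a + (l a b).2 • b} ⊆
          (fun p : (X → ℝ) × (X → ℝ) => (l p.1 p.2).1 • p.1 + (l p.1 p.2).2 • p.2) '' (A ×ˢ B) := by
        rintro w ⟨a, ha, b, hb, rfl⟩
        exact ⟨(a, b), ⟨ha, hb⟩, rfl⟩
      exact ((hAfin.prod hBfin).image _).subset this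
    · rintro A ⟨hAfin, hA⟩ B hBfin
      exact ⟨hAfin.union hBfin, fun K hK hs => hK.2.2.2.2.2 A (hA K hK hs) B hBfin⟩
  have h2 : CoherentK (ExA 𝒜) → (∅ : Set (X → ℝ)) ∉ ExA 𝒜 := by
    intro hcoh hmem
    have h0 : ((∅ : Set (X → ℝ)) ∪ {0}) ∈ ExA 𝒜 :=
      hcoh.2.2.2.2.2 ∅ hmem {0} (Set.finite_singleton 0)
    rw [Set.empty_union] at h0
    exact hcoh.2.2.1 h0
  have h3 : (∅ : Set (X → ℝ)) ∉ ExA 𝒜 → ∃ K : Set (Set (X → ℝ)), CoherentK K ∧ 𝒜 ⊆ K := by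
    intro h
    by_contra hn
    exact h ⟨Set.finite_empty, fun K hK hs => absurd ⟨K, hK, hs⟩ hn⟩
  refine ⟨⟨h1, fun hc => ⟨ExA 𝒜, hc, fun A hA => ⟨h𝒜 A hA, fun K hK hs => hs hA⟩⟩⟩,
    ⟨fun he => h2 (h1 he), h3⟩⟩
end

section
/- A choice function C is consistent (admits a coherent choice function C' with C'(A) ⊆ C(A) for all A) if and only if the assessment A_C = {C(A) − u : A ∈ Q, u ∈ R_C(A)} is consistent (is contained in some coherent set of desirable option sets). -/
open scoped BigOperators

variable {X : Type*}

lemma shift_zero (A : Set (X → ℝ)) : shift A 0 = A := by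
  simp [shift]

lemma shift_mono {A B : Set (X → ℝ)} (h : A ⊆ B) (u : X → ℝ) : shift A u ⊆ shift B u :=
  Set.image_mono h

lemma empty_not_mem {K : Set (Set (X → ℝ))} (hK : CoherentK K) : ∅ ∉ K := by
  intro h
  have := hK.2.2.2.2.2 ∅ h {0} (Set.finite_singleton 0)
  rw [Set.empty_union] at this
  exact hK.2.2.1 this

lemma removal {K : Set (Set (X → ℝ))} (hK : CoherentK K) {A : Set (X → ℝ)}
    {u v : X → ℝ} (hu : u ∈ A) (hv : v ∈ A) (huv : u ≠ v)
    (h1 : shift A u \ {0} ∈ K) (h2 : shift A v \ {0} ∈ K) :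
    shift (A \ {v}) u \ {0} ∈ K := by
  classical
  set l : (X → ℝ) → (X → ℝ) → ℝ × ℝ := fun a _ => if a = v - u then (1,1) else (1,0) with hl
  have hpos : ∀ a ∈ shift A u \ {0}, ∀ b ∈ shift A v \ {0},
      0 ≤ (l a b).1 ∧ 0 ≤ (l a b).2 ∧ 0 < (l a b).1 + (l a b).2 := by
    intro a _ b _
    by_cases h : a = v - u <;> simp [hl, h] <;> norm_num
  have hM := hK.2.2.2.2.1 _ h1 _ h2 l hpos
  have hMeq : {w | ∃ a ∈ shift A u \ {0}, ∃ b ∈ shift A v \ {0},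
      w = (l a b).1 • a + (l a b).2 • b} = shift (A \ {v}) u := by
    ext w
    constructor
    · rintro ⟨a, ⟨⟨x, hx, rfl⟩, hane⟩, b, ⟨⟨y, hy, rfl⟩, hbne⟩, rfl⟩
      by_cases h : x - u = v - u
      · have hxv : x = v := by
          have := sub_left_injective h
          exact this
        refine ⟨y, ⟨hy, ?_⟩, ?_⟩
        · intro hyv
          apply hbne
          have : y = v := hyv
          simp [this]
        · simp only [hl, h, if_pos, one_smul]
          abel
      · refine ⟨x, ⟨hx, ?_⟩, ?_⟩
        · intro hxv
          apply h
          have : x = v := hxv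
          rw [this]
        · simp [hl, h]
    · rintro ⟨x, ⟨hxA, hxv⟩, rfl⟩
      have hbmem : u - v ∈ shift A v \ {0} := by
        refine ⟨⟨u, hu, rfl⟩, ?_⟩
        simp [sub_eq_zero, huv]
      by_cases hxu : x = u
      · refine ⟨v - u, ⟨⟨v, hv, rfl⟩, ?_⟩, u - v, hbmem, ?_⟩
        · simp only [Set.mem_singleton_iff, sub_eq_zero]
          exact fun hh => huv hh.symm
        · simp only [hl, if_pos, one_smul]
          rw [hxu]
          abel
      · refine ⟨x - u, ⟨⟨x, hxA, rfl⟩, ?_⟩, u - v, hbmem, ?_⟩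
        · simp [sub_eq_zero, hxu]
        · have h : x - u ≠ v - u := by
            intro hh
            exact hxv (sub_left_injective hh)
          simp [hl, h]
  rw [hMeq] at hM
  exact hK.2.1 _ hM

lemma rejectAll {K : Set (Set (X → ℝ))} (hK : CoherentK K) :
    ∀ R : Set (X → ℝ), R.Finite → ∀ A : Set (X → ℝ), R ⊆ A →
    ∀ u ∈ A \ R, (∀ v ∈ R, shift A v \ {0} ∈ K) → shift A u \ {0} ∈ K →
    shift (A \ R) u \ {0} ∈ K := by
  intro R hR
  refine Set.Finite.induction_on (motive := fun R _ => ∀ A : Set (X → ℝ), R ⊆ A →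
    ∀ u ∈ A \ R, (∀ v ∈ R, shift A v \ {0} ∈ K) → shift A u \ {0} ∈ K →
    shift (A \ R) u \ {0} ∈ K) R hR ?_ ?_
  · intro A _ u hu _ hrej
    simpa using hrej
  · intro v R' hvR' hR' IH A hRA u hu hrejR hreju
    have hvA : v ∈ A := hRA (Set.mem_insert v R')
    have huA : u ∈ A := hu.1
    have huv : u ≠ v := fun h => hu.2 (h ▸ Set.mem_insert v R')
    have hvrej : shift A v \ {0} ∈ K := hrejR v (Set.mem_insert v R')
    have hu' : shift (A \ {v}) u \ {0} ∈ K := removal hK huA hvA huv hreju hvrej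
    have hrej' : ∀ w ∈ R', shift (A \ {v}) w \ {0} ∈ K := by
      intro w hw
      have hwv : w ≠ v := fun h => hvR' (h ▸ hw)
      exact removal hK (hRA (Set.mem_insert_of_mem v hw)) hvA hwv
        (hrejR w (Set.mem_insert_of_mem v hw)) hvrej
    have hsub : R' ⊆ A \ {v} := fun w hw =>
      ⟨hRA (Set.mem_insert_of_mem v hw), fun h => hvR' (h ▸ hw)⟩
    have humem : u ∈ (A \ {v}) \ R' := ⟨⟨huA, huv⟩, fun h => hu.2 (Set.mem_insert_of_mem v h)⟩
    have := IH (A \ {v}) hsub u humem hrej' hu'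
    have heq : (A \ {v}) \ R' = A \ insert v R' := by
      rw [Set.diff_diff, Set.singleton_union]
    rwa [heq] at this

lemma rejected_iff {C' : Set (X → ℝ) → Set (X → ℝ)} (h : CoherentC C')
    {A : Set (X → ℝ)} (hA : A.Finite) {u : X → ℝ} (hu : u ∈ A) :
    u ∉ C' A ↔ shift A u \ {0} ∈ KC C' := by
  have h0 : (0 : X → ℝ) ∈ shift A u := zero_mem_shift hu
  have heq : (shift A u \ {0}) ∪ {0} = shift A u :=
    Set.diff_union_of_subset (Set.singleton_subset_iff.2 h0)
  have hC2 := h.2.2.1 A hA u hu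
  constructor
  · intro hrej
    refine ⟨(shift_finite hA u).diff, ?_⟩
    rw [heq]
    exact fun h0' => hrej (hC2.2 h0')
  · rintro ⟨-, hmem⟩ hcon
    rw [heq] at hmem
    exact hmem (hC2.1 hcon)

lemma coherentK_KC {C' : Set (X → ℝ) → Set (X → ℝ)} (h : CoherentC C') :
    CoherentK (KC C') := by
  refine ⟨fun A hA => hA.1, ?_, ?_, h.2.2.2.1, h.2.2.2.2.1, ?_⟩
  · rintro A ⟨hAfin, hA⟩
    refine ⟨hAfin.diff, ?_⟩
    rwa [Set.diff_union_self]
  · rintro ⟨-, h0⟩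
    rw [Set.union_self] at h0
    have hne : C' {(0 : X → ℝ)} ≠ ∅ :=
      h.2.1 _ (Set.finite_singleton 0) (Set.singleton_ne_empty 0)
    obtain ⟨x, hx⟩ := Set.nonempty_iff_ne_empty.2 hne
    have hx0 : x ∈ ({0} : Set (X → ℝ)) := h.1 {0} hx
    have : x = 0 := hx0
    exact h0 (this ▸ hx)
  · rintro A ⟨hAfin, hA⟩ B hBfin
    refine ⟨hAfin.union hBfin, ?_⟩
    intro hcon
    have hmem : (0 : X → ℝ) ∈ (A ∪ {0}) \ C' (A ∪ {0}) := ⟨Set.mem_union_right _ rfl, hA⟩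
    have hsub : A ∪ {0} ⊆ A ∪ B ∪ {0} := by
      intro x hx
      rcases hx with hx | hx
      · exact Or.inl (Or.inl hx)
      · exact Or.inr hx
    have := h.2.2.2.2.2 (A ∪ {0}) (A ∪ B ∪ {0}) (hAfin.union (Set.finite_singleton 0))
      ((hAfin.union hBfin).union (Set.finite_singleton 0)) hsub hmem
    exact this.2 hcon

lemma mem_KC_CK {K : Set (Set (X → ℝ))} {A : Set (X → ℝ)} :
    A ∈ KC (CK K) ↔ A.Finite ∧ A \ {0} ∈ K := by
  have hsh : shift (A ∪ {0}) 0 = A ∪ {0} := shift_zero _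
  constructor
  · rintro ⟨hAfin, hA⟩
    refine ⟨hAfin, ?_⟩
    by_contra hcon
    apply hA
    refine ⟨Set.mem_union_right _ rfl, ?_⟩
    rw [hsh, Set.union_diff_right]
    exact hcon
  · rintro ⟨hAfin, hA⟩
    refine ⟨hAfin, ?_⟩
    rintro ⟨-, hmem⟩
    apply hmem
    rw [hsh, Set.union_diff_right]
    exact hA

lemma rejected_CK {K : Set (Set (X → ℝ))} {A : Set (X → ℝ)} {u : X → ℝ} (hu : u ∈ A) :
    u ∉ CK K A ↔ shift A u \ {0} ∈ K := by
  constructor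
  · intro h
    by_contra hcon
    exact h ⟨hu, hcon⟩
  · intro h hcon
    exact hcon.2 h

lemma CK_nonempty {K : Set (Set (X → ℝ))} (hK : CoherentK K)
    {A : Set (X → ℝ)} (hA : A.Finite) (hne : A ≠ ∅) : CK K A ≠ ∅ := by
  intro hempty
  obtain ⟨u0, hu0⟩ := Set.nonempty_iff_ne_empty.2 hne
  have hrej : ∀ u ∈ A, shift A u \ {0} ∈ K := by
    intro u hu
    rw [← rejected_CK hu]
    intro hcon
    rw [hempty] at hcon
    exact hcon
  have := rejectAll hK (A \ {u0}) (hA.diff) A Set.diff_subset u0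
    ⟨hu0, fun h => h.2 rfl⟩ (fun v hv => hrej v hv.1) (hrej u0 hu0)
  rw [Set.diff_diff_cancel_left (Set.singleton_subset_iff.2 hu0)] at this
  have heq : shift {u0} u0 \ {0} = (∅ : Set (X → ℝ)) := by
    ext w
    simp [shift]
  rw [heq] at this
  exact empty_not_mem hK this

lemma coherentC_CK {K : Set (Set (X → ℝ))} (hK : CoherentK K) :
    CoherentC (CK K) := by
  classical
  refine ⟨fun A u hu => hu.1, fun A hA hne => CK_nonempty hK hA hne, ?_, ?_, ?_, ?_⟩
  · -- C2
    intro A hA u hu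
    have h0 : (0 : X → ℝ) ∈ shift A u := zero_mem_shift hu
    have hsh : shift (shift A u) 0 = shift A u := shift_zero _
    constructor
    · rintro ⟨-, hmem⟩
      refine ⟨h0, ?_⟩
      rwa [hsh]
    · rintro ⟨-, hmem⟩
      rw [hsh] at hmem
      exact ⟨hu, hmem⟩
  · -- C3
    intro u hupos
    rw [mem_KC_CK]
    refine ⟨Set.finite_singleton u, ?_⟩
    have h0u : (0 : X → ℝ) ∉ ({u} : Set (X → ℝ)) := by
      simp only [Set.mem_singleton_iff]
      exact fun h => (ne_of_gt hupos) h.symm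
    rw [Set.diff_singleton_eq_self h0u]
    exact hK.2.2.2.1 u hupos
  · -- C4
    intro A hA B hB l hl
    rw [mem_KC_CK] at hA hB ⊢
    obtain ⟨hAfin, hAK⟩ := hA
    obtain ⟨hBfin, hBK⟩ := hB
    have hl' : ∀ a ∈ A \ {0}, ∀ b ∈ B \ {0},
        0 ≤ (l a b).1 ∧ 0 ≤ (l a b).2 ∧ 0 < (l a b).1 + (l a b).2 :=
      fun a ha b hb => hl a ha.1 b hb.1
    have hS' := hK.2.2.2.2.1 _ hAK _ hBK l hl'
    set S : Set (X → ℝ) := {w | ∃ a ∈ A, ∃ b ∈ B, w = (l a b).1 • a + (l a b).2 • b} with hS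
    have hSfin : S.Finite := by
      have : S ⊆ (fun p : (X → ℝ) × (X → ℝ) => (l p.1 p.2).1 • p.1 + (l p.1 p.2).2 • p.2) ''
          (A ×ˢ B) := by
        rintro w ⟨a, ha, b, hb, rfl⟩
        exact ⟨(a, b), ⟨ha, hb⟩, rfl⟩
      exact ((hAfin.prod hBfin).image _).subset this
    refine ⟨hSfin, ?_⟩
    have hsub : {w | ∃ a ∈ A \ {0}, ∃ b ∈ B \ {0}, w = (l a b).1 • a + (l a b).2 • b} \ {0}
        ⊆ S \ {0} := by
      rintro w ⟨⟨a, ha, b, hb, rfl⟩, hne⟩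
      exact ⟨⟨a, ha.1, b, hb.1, rfl⟩, hne⟩
    have h1 := hK.2.1 _ hS'
    have h2 := hK.2.2.2.2.2 _ h1 (S \ {0}) (hSfin.diff)
    rwa [Set.union_eq_self_of_subset_left hsub] at h2
  · -- C5
    intro A B hA hB hAB u hu
    have hrejA : shift A u \ {0} ∈ K := (rejected_CK hu.1).1 hu.2
    have huB : u ∈ B := hAB hu.1
    refine ⟨huB, ?_⟩
    rw [rejected_CK huB]
    have := hK.2.2.2.2.2 _ hrejA (shift B u \ {0}) ((shift_finite hB u).diff)
    rwa [Set.union_eq_self_of_subset_left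
      (Set.diff_subset_diff_left (shift_mono hAB u))] at this

/-- A choice function C is consistent iff its associated assessment A_C is consistent. -/
theorem stmt_13 {X : Type*} (C : Set (X → ℝ) → Set (X → ℝ)) (hC : ∀ A, C A ⊆ A) :
    (∃ C' : Set (X → ℝ) → Set (X → ℝ), CoherentC C' ∧
        ∀ A : Set (X → ℝ), A.Finite → C' A ⊆ C A) ↔
    (∃ K : Set (Set (X → ℝ)), CoherentK K ∧ AC C ⊆ K) := by
  classical
  constructor
  · rintro ⟨C', hC', hsub⟩
    refine ⟨KC C', coherentK_KC hC', ?_⟩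
    rintro B0 ⟨A, hAfin, u, hu, rfl⟩
    have hCA : C A ⊆ A := hC A
    have hCAfin : (C A).Finite := hAfin.subset hCA
    set D : Set (X → ℝ) := C A ∪ {u} with hD
    have hDsub : D ⊆ A := Set.union_subset hCA (Set.singleton_subset_iff.2 hu.1)
    have hKcoh := coherentK_KC hC'
    have hreju : shift A u \ {0} ∈ KC C' := by
      rw [← rejected_iff hC' hAfin hu.1]
      exact fun h => hu.2 (hsub A hAfin h)
    have hrejR : ∀ v ∈ A \ D, shift A v \ {0} ∈ KC C' := by
      intro v hv
      rw [← rejected_iff hC' hAfin hv.1]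
      intro h
      exact hv.2 (Or.inl (hsub A hAfin h))
    have hmem : u ∈ A \ (A \ D) := ⟨hu.1, fun h => h.2 (Or.inr rfl)⟩
    have hfinal := rejectAll hKcoh (A \ D) (hAfin.diff) A Set.diff_subset u hmem hrejR hreju
    rw [Set.diff_diff_cancel_left hDsub] at hfinal
    have hshD : shift D u = shift (C A) u ∪ {0} := by
      rw [hD]
      unfold shift
      rw [Set.image_union]
      congr 1
      rw [Set.image_singleton, sub_self]
    obtain ⟨hfin, h0⟩ := hfinal
    refine ⟨shift_finite hCAfin u, ?_⟩
    have heq : (shift D u \ {0}) ∪ {0} = shift (C A) u ∪ {0} := by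
      rw [Set.diff_union_self, hshD, Set.union_assoc, Set.union_self]
    rwa [heq] at h0
  · rintro ⟨K, hK, hACK⟩
    refine ⟨CK K, coherentC_CK hK, ?_⟩
    intro A hAfin u hu
    by_contra hcon
    have hB : shift (C A) u ∈ K := hACK ⟨A, hAfin, u, ⟨hu.1, hcon⟩, rfl⟩
    have h1 : shift (C A) u \ {0} ∈ K := hK.2.1 _ hB
    have h2 := hK.2.2.2.2.2 _ h1 (shift A u \ {0}) ((shift_finite hAfin u).diff)
    rw [Set.union_eq_self_of_subset_left
      (Set.diff_subset_diff_left (shift_mono (hC A) u))] at h2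
    exact hu.2 h2
end

section
/- Let 𝒜 = {A₁,...,Aₙ} be a finite assessment of finite option sets and Ex(𝒜) its natural extension (intersection of all coherent sets of desirable option sets containing 𝒜, with ⋂∅ = Q). A finite option set S belongs to Ex(𝒜) if and only if either S contains some option u > 0, or n ≠ 0 and for every tuple u ∈ A₁×···×Aₙ there exist s ∈ S ∪ {0} and a tuple λ ∈ ℝⁿ of nonnegative reals with positive sum such that Σⱼ λⱼ uⱼ ≤ s. -/
open scoped BigOperators

variable {X : Type*}

section Helpers

lemma pi_pos_of {u : X → ℝ} (h : 0 ≤ u) (h2 : u ≠ 0) : 0 < u :=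
  lt_iff_le_and_ne.mpr ⟨h, Ne.symm h2⟩

lemma pi_pos_ne {u : X → ℝ} (h : 0 < u) : u ≠ 0 :=
  fun h0 => absurd (h0 ▸ h) (lt_irrefl 0)

lemma smul_pos_pi {c : ℝ} {u : X → ℝ} (hc : 0 < c) (hu : 0 < u) : 0 < c • u := by
  refine pi_pos_of (smul_nonneg hc.le hu.le) (smul_ne_zero hc.ne' (pi_pos_ne hu))

/-- A positive combination of two positive vectors is positive. -/
lemma combo_pos {c₁ c₂ : ℝ} {u₁ u₂ : X → ℝ} (h₁ : 0 ≤ c₁) (h₂ : 0 ≤ c₂)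
    (hsum : 0 < c₁ + c₂) (hu₁ : 0 < u₁) (hu₂ : 0 < u₂) : 0 < c₁ • u₁ + c₂ • u₂ := by
  rcases h₁.lt_or_eq with hc₁ | hc₁
  · calc (0 : X → ℝ) < c₁ • u₁ := smul_pos_pi hc₁ hu₁
      _ ≤ c₁ • u₁ + c₂ • u₂ := le_add_of_nonneg_right (smul_nonneg h₂ hu₂.le)
  · have hc₂ : 0 < c₂ := by rw [← hc₁] at hsum; simpa using hsum
    calc (0 : X → ℝ) < c₂ • u₂ := smul_pos_pi hc₂ hu₂
      _ ≤ c₁ • u₁ + c₂ • u₂ := le_add_of_nonneg_left (smul_nonneg h₁ hu₁.le)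

lemma K3set_finite {B₁ B₂ : Set (X → ℝ)} (h₁ : B₁.Finite) (h₂ : B₂.Finite)
    (l : (X → ℝ) → (X → ℝ) → ℝ × ℝ) :
    {w | ∃ a ∈ B₁, ∃ b ∈ B₂, w = (l a b).1 • a + (l a b).2 • b}.Finite := by
  have : {w | ∃ a ∈ B₁, ∃ b ∈ B₂, w = (l a b).1 • a + (l a b).2 • b}
      = Set.image2 (fun a b => (l a b).1 • a + (l a b).2 • b) B₁ B₂ := by
    ext w; simp [Set.mem_image2, eq_comm]
  rw [this]; exact h₁.image2 _ h₂

lemma Dset_finite {n : ℕ} {A : Fin n → Set (X → ℝ)} (hA : ∀ j, (A j).Finite)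
    (Λ : (Fin n → X → ℝ) → Fin n → ℝ) :
    {w | ∃ u, (∀ j, u j ∈ A j) ∧ w = ∑ j, Λ u j • u j}.Finite := by
  apply Set.Finite.subset ((Set.Finite.pi hA).image (fun u => ∑ j, Λ u j • u j))
  rintro w ⟨u, hu, rfl⟩
  exact ⟨u, fun j _ => hu j, rfl⟩

end Helpers

section Posi

/-- The set of full combinations whose last component is restricted to `s`. -/
def Dset {X : Type*} {n : ℕ} (A : Fin n → Set (X → ℝ)) (Λ : (Fin n → X → ℝ) → Fin n → ℝ)
    (s : Finset (X → ℝ)) (j₀ : Fin n) : Set (X → ℝ) :=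
  {w | ∃ u, (∀ j, u j ∈ A j) ∧ u j₀ ∈ s ∧ w = ∑ j, Λ u j • u j}

lemma posiK_step [DecidableEq (X → ℝ)] {K : Set (Set (X → ℝ))} (hK : CoherentK K) {n : ℕ} (hn : 0 < n)
    (A : Fin (n+1) → Set (X → ℝ)) (hA : ∀ j, (A j).Finite)
    (Λ : (Fin (n+1) → X → ℝ) → Fin (n+1) → ℝ)
    (hΛ : ∀ u, (∀ j, u j ∈ A j) → (∀ j, 0 ≤ Λ u j) ∧ 0 < ∑ j, Λ u j)
    (hIH : ∀ (Λ' : (Fin n → X → ℝ) → Fin n → ℝ),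
      (∀ u', (∀ j, u' j ∈ A j.castSucc) → (∀ j, 0 ≤ Λ' u' j) ∧ 0 < ∑ j, Λ' u' j) →
      {w | ∃ u', (∀ j, u' j ∈ A j.castSucc) ∧ w = ∑ j, Λ' u' j • u' j} ∈ K)
    (c₀ : X → ℝ) (hc₀ : c₀ ∈ A (Fin.last n)) (s : Finset (X → ℝ))
    (hW : ((A (Fin.last n) \ ↑s) ∪ Dset A Λ s (Fin.last n)) ∈ K) :
    ((A (Fin.last n) \ ↑(insert c₀ s)) ∪ Dset A Λ (insert c₀ s) (Fin.last n)) ∈ K := by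
  classical
  obtain ⟨hKfin, hK0, hK1, hK2, hK3, hK4⟩ := hK
  have hsnocmem : ∀ (u' : Fin n → X → ℝ), (∀ j, u' j ∈ A j.castSucc) →
      ∀ j, (Fin.snoc u' c₀ : Fin (n+1) → X → ℝ) j ∈ A j := by
    intro u' hu' j
    refine Fin.lastCases ?_ ?_ j
    · simpa using hc₀
    · intro i; simpa using hu' i
  set σ : (Fin n → X → ℝ) → ℝ := fun u' => ∑ j : Fin n, Λ ((Fin.snoc u' c₀ : Fin (n+1) → X → ℝ)) j.castSucc with hσ
  set L' : (Fin n → X → ℝ) → Fin n → ℝ := fun u' j =>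
    if 0 < σ u' then Λ ((Fin.snoc u' c₀ : Fin (n+1) → X → ℝ)) j.castSucc else if j = ⟨0, hn⟩ then 1 else 0 with hL'
  have hL'pos : ∀ u', 0 < σ u' → ∀ j, L' u' j = Λ ((Fin.snoc u' c₀ : Fin (n+1) → X → ℝ)) j.castSucc := by
    intro u' h j; simp only [hL', if_pos h]
  have hL'neg : ∀ u', ¬ 0 < σ u' → ∀ j, L' u' j = if j = (⟨0, hn⟩ : Fin n) then 1 else 0 := by
    intro u' h j; simp only [hL', if_neg h]
  have hσnonneg : ∀ u', (∀ j, u' j ∈ A j.castSucc) → 0 ≤ σ u' := by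
    intro u' hu'
    exact Finset.sum_nonneg fun j _ => (hΛ _ (hsnocmem u' hu')).1 _
  have hσzero : ∀ u', (∀ j, u' j ∈ A j.castSucc) → ¬ 0 < σ u' →
      ∀ j : Fin n, Λ ((Fin.snoc u' c₀ : Fin (n+1) → X → ℝ)) j.castSucc = 0 := by
    intro u' hu' hneg j
    have h0 : σ u' = 0 := le_antisymm (not_lt.1 hneg) (hσnonneg u' hu')
    have h0' : ∑ j : Fin n, Λ ((Fin.snoc u' c₀ : Fin (n+1) → X → ℝ)) j.castSucc = 0 := by
      simpa [hσ] using h0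
    exact (Finset.sum_eq_zero_iff_of_nonneg
      (fun j _ => (hΛ _ (hsnocmem u' hu')).1 j.castSucc)).1 h0' j (Finset.mem_univ j)
  have hlastpos : ∀ u', (∀ j, u' j ∈ A j.castSucc) → ¬ 0 < σ u' →
      0 < Λ ((Fin.snoc u' c₀ : Fin (n+1) → X → ℝ)) (Fin.last n) := by
    intro u' hu' hneg
    have h1 := (hΛ _ (hsnocmem u' hu')).2
    rw [Fin.sum_univ_castSucc] at h1
    have h0' : ∑ j : Fin n, Λ ((Fin.snoc u' c₀ : Fin (n+1) → X → ℝ)) j.castSucc = 0 :=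
      Finset.sum_eq_zero fun j _ => hσzero u' hu' hneg j
    rw [h0', zero_add] at h1
    exact h1
  have hL'cond : ∀ u', (∀ j, u' j ∈ A j.castSucc) →
      (∀ j, 0 ≤ L' u' j) ∧ 0 < ∑ j, L' u' j := by
    intro u' hu'
    by_cases hσp : 0 < σ u'
    · constructor
      · intro j; rw [hL'pos u' hσp j]; exact (hΛ _ (hsnocmem u' hu')).1 _
      · have he : ∑ j, L' u' j = σ u' := by
          rw [hσ]
          exact Finset.sum_congr rfl fun j _ => hL'pos u' hσp j
        rw [he]; exact hσp
    · constructor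
      · intro j; rw [hL'neg u' hσp j]; split <;> norm_num
      · have he : ∑ j, L' u' j = 1 := by
          rw [Finset.sum_congr rfl fun j _ => hL'neg u' hσp j]
          simp
        rw [he]; norm_num
  have hP := hIH L' hL'cond
  set l : (X → ℝ) → (X → ℝ) → ℝ × ℝ := fun p y =>
    if y = c₀ then
      (if h : ∃ u', (∀ j, u' j ∈ A j.castSucc) ∧ p = ∑ j, L' u' j • u' j then
        (if 0 < σ h.choose then (1, Λ ((Fin.snoc h.choose c₀ : Fin (n+1) → X → ℝ)) (Fin.last n))
         else (0, Λ ((Fin.snoc h.choose c₀ : Fin (n+1) → X → ℝ)) (Fin.last n)))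
      else (0, 1))
    else (0, 1) with hl
  have hlcond : ∀ p ∈ {w | ∃ u', (∀ j, u' j ∈ A j.castSucc) ∧ w = ∑ j, L' u' j • u' j},
      ∀ y ∈ (A (Fin.last n) \ ↑s) ∪ Dset A Λ s (Fin.last n),
      0 ≤ (l p y).1 ∧ 0 ≤ (l p y).2 ∧ 0 < (l p y).1 + (l p y).2 := by
    intro p hp y hy
    by_cases hyc : y = c₀
    · have hp' : ∃ u', (∀ j, u' j ∈ A j.castSucc) ∧ p = ∑ j, L' u' j • u' j := hp
      have hval := hp'.choose_spec.1
      have hnn := (hΛ _ (hsnocmem _ hval)).1 (Fin.last n)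
      by_cases hσp : 0 < σ hp'.choose
      · have he : l p y = (1, Λ ((Fin.snoc hp'.choose c₀ : Fin (n+1) → X → ℝ)) (Fin.last n)) := by
          simp only [hl, if_pos hyc, dif_pos hp', if_pos hσp]
        rw [he]
        exact ⟨zero_le_one, hnn, by dsimp only; linarith⟩
      · have he : l p y = (0, Λ ((Fin.snoc hp'.choose c₀ : Fin (n+1) → X → ℝ)) (Fin.last n)) := by
          simp only [hl, if_pos hyc, dif_pos hp', if_neg hσp]
        rw [he]
        have := hlastpos _ hval hσp
        exact ⟨le_refl 0, hnn, by dsimp only; linarith⟩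
    · have he : l p y = (0, 1) := by simp only [hl, if_neg hyc]
      rw [he]
      norm_num
  have hO := hK3 _ hP _ hW l hlcond
  have hOsub : {w | ∃ a ∈ {w | ∃ u', (∀ j, u' j ∈ A j.castSucc) ∧ w = ∑ j, L' u' j • u' j},
      ∃ b ∈ (A (Fin.last n) \ ↑s) ∪ Dset A Λ s (Fin.last n),
      w = (l a b).1 • a + (l a b).2 • b} ⊆
      (A (Fin.last n) \ ↑(insert c₀ s)) ∪ Dset A Λ (insert c₀ s) (Fin.last n) := by
    rintro w ⟨p, hp, y, hy, rfl⟩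
    by_cases hyc : y = c₀
    · have hp' : ∃ u', (∀ j, u' j ∈ A j.castSucc) ∧ p = ∑ j, L' u' j • u' j := hp
      obtain ⟨hval, hpeq⟩ := hp'.choose_spec
      by_cases hσp : 0 < σ hp'.choose
      · have he : l p y = (1, Λ ((Fin.snoc hp'.choose c₀ : Fin (n+1) → X → ℝ)) (Fin.last n)) := by
          simp only [hl, if_pos hyc, dif_pos hp', if_pos hσp]
        rw [he, hyc]
        right
        refine ⟨(Fin.snoc hp'.choose c₀ : Fin (n+1) → X → ℝ), hsnocmem _ hval, by simp, ?_⟩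
        dsimp only
        rw [one_smul]
        simp only [Fin.sum_univ_castSucc, Fin.snoc_last, Fin.snoc_castSucc]
        have hps : (∑ j : Fin n,
            Λ ((Fin.snoc hp'.choose c₀ : Fin (n+1) → X → ℝ)) j.castSucc • hp'.choose j) = p :=
          calc (∑ j : Fin n,
              Λ ((Fin.snoc hp'.choose c₀ : Fin (n+1) → X → ℝ)) j.castSucc • hp'.choose j)
              = ∑ j : Fin n, L' hp'.choose j • hp'.choose j :=
                Finset.sum_congr rfl fun j _ => by rw [hL'pos _ hσp j]
            _ = p := hpeq.symm
        rw [hps]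
      · have he : l p y = (0, Λ ((Fin.snoc hp'.choose c₀ : Fin (n+1) → X → ℝ)) (Fin.last n)) := by
          simp only [hl, if_pos hyc, dif_pos hp', if_neg hσp]
        rw [he, hyc]
        right
        refine ⟨(Fin.snoc hp'.choose c₀ : Fin (n+1) → X → ℝ), hsnocmem _ hval, by simp, ?_⟩
        dsimp only
        rw [zero_smul, zero_add]
        simp only [Fin.sum_univ_castSucc, Fin.snoc_last, Fin.snoc_castSucc]
        have hz : ∀ j : Fin n,
            Λ ((Fin.snoc hp'.choose c₀ : Fin (n+1) → X → ℝ)) j.castSucc • hp'.choose j = 0 :=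
          fun j => by rw [hσzero _ hval hσp j, zero_smul]
        rw [Finset.sum_eq_zero fun j _ => hz j, zero_add]
    · have he : l p y = (0, 1) := by simp only [hl, if_neg hyc]
      have hw : (l p y).1 • p + (l p y).2 • y = y := by rw [he]; simp
      rw [hw]
      rcases hy with hy1 | hy2
      · left
        refine ⟨hy1.1, ?_⟩
        intro hmem
        rcases (by simpa using hmem : y = c₀ ∨ y ∈ s) with h | h
        · exact hyc h
        · exact hy1.2 (by simpa using h)
      · right
        obtain ⟨u, hu, hus, hue⟩ := hy2
        exact ⟨u, hu, Finset.mem_insert_of_mem hus, hue⟩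
  have hfin : ((A (Fin.last n) \ ↑(insert c₀ s)) ∪ Dset A Λ (insert c₀ s) (Fin.last n)).Finite := by
    apply Set.Finite.union ((hA _).diff)
    apply Set.Finite.subset (Dset_finite hA Λ)
    rintro w ⟨u, hu, -, he⟩
    exact ⟨u, hu, he⟩
  have hfinal := hK4 _ hO _ hfin
  rwa [Set.union_eq_self_of_subset_left hOsub] at hfinal

/-- Closure of coherent sets of desirable option sets under finite positive
combinations with tuple-dependent coefficients. -/
lemma posiK {K : Set (Set (X → ℝ))} (hK : CoherentK K) :
    ∀ (n : ℕ) (A : Fin n → Set (X → ℝ)), (∀ j, (A j).Finite) → (∀ j, A j ∈ K) →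
    ∀ (Λ : (Fin n → X → ℝ) → Fin n → ℝ),
    (∀ u, (∀ j, u j ∈ A j) → (∀ j, 0 ≤ Λ u j) ∧ 0 < ∑ j, Λ u j) →
    {w | ∃ u, (∀ j, u j ∈ A j) ∧ w = ∑ j, Λ u j • u j} ∈ K := by
  classical
  intro n
  induction n with
  | zero =>
    intro A hA hAK Λ hΛ
    have h := (hΛ (fun j => j.elim0) (fun j => j.elim0)).2
    simp at h
  | succ n ih =>
    intro A hA hAK Λ hΛ
    rcases Nat.eq_zero_or_pos n with hn | hn
    · subst hn
      have key := hK.2.2.2.2.1 (A 0) (hAK 0) (A 0) (hAK 0)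
        (fun a _ => (Λ (fun _ => a) 0, (0:ℝ))) ?_
      · have hid : {w | ∃ u, (∀ j, u j ∈ A j) ∧ w = ∑ j, Λ u j • u j}
            = {w | ∃ a ∈ A 0, ∃ b ∈ A 0,
                w = ((fun (a _ : X → ℝ) => (Λ (fun _ => a) 0, (0:ℝ))) a b).1 • a
                  + ((fun (a _ : X → ℝ) => (Λ (fun _ => a) 0, (0:ℝ))) a b).2 • b} := by
          ext w
          simp only [Set.mem_setOf_eq]
          constructor
          · rintro ⟨u, hu, rfl⟩
            refine ⟨u 0, hu 0, u 0, hu 0, ?_⟩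
            have hu0 : u = fun _ => u 0 := funext fun j => by rw [Fin.eq_zero j]
            rw [Fin.sum_univ_one, ← hu0]
            simp
          · rintro ⟨a, ha, b, hb, rfl⟩
            refine ⟨fun _ => a, fun j => by rw [Fin.eq_zero j]; exact ha, ?_⟩
            rw [Fin.sum_univ_one]
            simp
        rw [hid]
        exact key
      · intro a ha b hb
        have hva : ∀ j : Fin 1, (fun _ : Fin 1 => a) j ∈ A j := by
          intro j; rw [Fin.eq_zero j]; exact ha
        have h := hΛ (fun _ => a) hva
        refine ⟨h.1 0, le_refl 0, ?_⟩
        have h2 := h.2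
        rw [Fin.sum_univ_one] at h2
        simpa using h2
    · have key : ∀ s : Finset (X → ℝ), ↑s ⊆ A (Fin.last n) →
          ((A (Fin.last n) \ ↑s) ∪ Dset A Λ s (Fin.last n)) ∈ K := by
        intro s
        induction s using Finset.induction_on with
        | empty =>
          intro _
          have he : ((A (Fin.last n) \ ↑(∅ : Finset (X → ℝ)))
              ∪ Dset A Λ ∅ (Fin.last n)) = A (Fin.last n) := by
            simp [Dset]
          rw [he]
          exact hAK _
        | @insert c₀ s hc₀s ihs =>
          intro hsub
          refine posiK_step hK hn A hA Λ hΛ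
            (fun Λ' hΛ' => ih (fun j => A j.castSucc) (fun j => hA _) (fun j => hAK _) Λ' hΛ')
            c₀ (hsub (by simp)) s (ihs fun x hx => hsub ?_)
          simp only [Finset.coe_insert, Set.mem_insert_iff]
          right
          exact hx
      have hCF := key (hA (Fin.last n)).toFinset (by simp [Set.Finite.coe_toFinset])
      have hid : ((A (Fin.last n) \ ↑(hA (Fin.last n)).toFinset)
          ∪ Dset A Λ (hA (Fin.last n)).toFinset (Fin.last n))
          = {w | ∃ u, (∀ j, u j ∈ A j) ∧ w = ∑ j, Λ u j • u j} := by
        rw [Set.Finite.coe_toFinset, Set.diff_self, Set.empty_union]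
        ext w
        simp only [Dset, Set.mem_setOf_eq]
        constructor
        · rintro ⟨u, hu, -, he⟩; exact ⟨u, hu, he⟩
        · rintro ⟨u, hu, he⟩; exact ⟨u, hu, (hA _).mem_toFinset.2 (hu _), he⟩
      rw [← hid]
      exact hCF

end Posi

/-- Characterization of the natural extension of a finite assessment: a finite option
set S belongs to Ex({A₁,…,Aₙ}) iff S contains a positive option, or n ≠ 0 and for every
tuple u ∈ A₁×···×Aₙ there are s ∈ S ∪ {0} and λ ∈ ℝ^{n,+} with Σ λⱼuⱼ ≤ s. -/
theorem stmt_14 {X : Type*} {n : ℕ} (A : Fin n → Set (X → ℝ))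
    (hA : ∀ j, (A j).Finite) (S : Set (X → ℝ)) (hS : S.Finite) :
    S ∈ ExA {B | ∃ j : Fin n, B = A j} ↔
      ((∃ u ∈ S, (0 : X → ℝ) < u) ∨
        (n ≠ 0 ∧ ∀ u : Fin n → X → ℝ, (∀ j, u j ∈ A j) →
          ∃ s ∈ S ∪ {0}, ∃ l : Fin n → ℝ,
            (∀ j, 0 ≤ l j) ∧ 0 < ∑ j, l j ∧ ∑ j, l j • u j ≤ s)) := by
  classical
  constructor
  · -- Forward direction: via the coherent set K* defined by the right-hand side.
    intro hEx
    obtain ⟨hSfin, hall⟩ := hEx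
    by_cases hbad : n ≠ 0 ∧ ∀ u : Fin n → X → ℝ, (∀ j, u j ∈ A j) →
        ∃ lam : Fin n → ℝ, (∀ j, 0 ≤ lam j) ∧ 0 < ∑ j, lam j ∧ ∑ j, lam j • u j ≤ 0
    · right
      refine ⟨hbad.1, fun u hu => ?_⟩
      obtain ⟨lam, h1, h2, h3⟩ := hbad.2 u hu
      exact ⟨0, Set.mem_union_right _ rfl, lam, h1, h2, h3⟩
    · set Kstar : Set (Set (X → ℝ)) := {B | B.Finite ∧ ((∃ v ∈ B, (0:X→ℝ) < v) ∨
        (n ≠ 0 ∧ ∀ u : Fin n → X → ℝ, (∀ j, u j ∈ A j) →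
          ∃ s ∈ B ∪ {0}, ∃ lam : Fin n → ℝ,
            (∀ j, 0 ≤ lam j) ∧ 0 < ∑ j, lam j ∧ ∑ j, lam j • u j ≤ s))} with hKstar
      have hco : CoherentK Kstar := by
        refine ⟨fun B hB => hB.1, ?_, ?_, ?_, ?_, ?_⟩
        · -- K0: removing the zero option
          intro B hB
          refine ⟨hB.1.diff, ?_⟩
          rcases hB.2 with ⟨v, hv, hvpos⟩ | ⟨hn0, h2⟩
          · exact Or.inl ⟨v, ⟨hv, by simpa using pi_pos_ne hvpos⟩, hvpos⟩
          · right
            refine ⟨hn0, fun u hu => ?_⟩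
            obtain ⟨s, hs, lam, h1, h2', h3⟩ := h2 u hu
            rcases hs with hsB | hs0
            · by_cases hz : s = 0
              · exact ⟨0, Set.mem_union_right _ rfl, lam, h1, h2', hz ▸ h3⟩
              · exact ⟨s, Set.mem_union_left _ ⟨hsB, by simpa using hz⟩, lam, h1, h2', h3⟩
            · exact ⟨s, Set.mem_union_right _ hs0, lam, h1, h2', h3⟩
        · -- K1
          intro hmem
          rcases hmem.2 with ⟨v, hv, hvpos⟩ | ⟨hn0, h2⟩
          · rw [Set.mem_singleton_iff.1 hv] at hvpos
            exact lt_irrefl _ hvpos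
          · refine hbad ⟨hn0, fun u hu => ?_⟩
            obtain ⟨s, hs, lam, h1, h2', h3⟩ := h2 u hu
            have hs0 : s = 0 := by
              rcases hs with h | h
              · exact Set.mem_singleton_iff.1 h
              · exact Set.mem_singleton_iff.1 h
            exact ⟨lam, h1, h2', hs0 ▸ h3⟩
        · -- K2
          exact fun u hu => ⟨Set.finite_singleton u, Or.inl ⟨u, rfl, hu⟩⟩
        · -- K3
          intro B₁ hB₁ B₂ hB₂ l hl
          refine ⟨K3set_finite hB₁.1 hB₂.1 l, ?_⟩
          by_cases hpos : ∃ w ∈ {w | ∃ a ∈ B₁, ∃ b ∈ B₂,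
              w = (l a b).1 • a + (l a b).2 • b}, (0:X→ℝ) < w
          · exact Or.inl hpos
          · rcases hB₁.2 with h₁ | ⟨hn0, h₁⟩
            · rcases hB₂.2 with h₂ | ⟨hn0, h₂⟩
              · exfalso
                obtain ⟨v₁, hv₁, hp₁⟩ := h₁
                obtain ⟨v₂, hv₂, hp₂⟩ := h₂
                obtain ⟨c1, c2, csum⟩ := hl v₁ hv₁ v₂ hv₂
                exact hpos ⟨_, ⟨v₁, hv₁, v₂, hv₂, rfl⟩, combo_pos c1 c2 csum hp₁ hp₂⟩
              · obtain ⟨v₁, hv₁, hp₁⟩ := h₁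
                refine Or.inr ⟨hn0, fun u hu => ?_⟩
                obtain ⟨s, hs, lam, ha, hb, hc⟩ := h₂ u hu
                rcases hs with hsB | hs0
                · have hll := hl v₁ hv₁ s hsB
                  by_cases h20 : (l v₁ s).2 = 0
                  · exfalso
                    apply hpos
                    refine ⟨(l v₁ s).1 • v₁ + (l v₁ s).2 • s, ⟨v₁, hv₁, s, hsB, rfl⟩, ?_⟩
                    rw [h20, zero_smul, add_zero]
                    have h1pos : 0 < (l v₁ s).1 := by
                      have := hll.2.2; rw [h20, add_zero] at this; exact this
                    exact smul_pos_pi h1pos hp₁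
                  · have h2pos : 0 < (l v₁ s).2 := lt_of_le_of_ne hll.2.1 (Ne.symm h20)
                    refine ⟨(l v₁ s).1 • v₁ + (l v₁ s).2 • s,
                      Set.mem_union_left _ ⟨v₁, hv₁, s, hsB, rfl⟩,
                      fun j => (l v₁ s).2 * lam j,
                      fun j => mul_nonneg h2pos.le (ha j), ?_, ?_⟩
                    · rw [← Finset.mul_sum]
                      exact mul_pos h2pos hb
                    · have he : (∑ j, ((l v₁ s).2 * lam j) • u j)
                          = (l v₁ s).2 • ∑ j, lam j • u j := by
                        rw [Finset.smul_sum]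
                        exact Finset.sum_congr rfl fun j _ => (mul_smul _ _ _)
                      rw [he]
                      calc (l v₁ s).2 • ∑ j, lam j • u j ≤ (l v₁ s).2 • s :=
                            smul_le_smul_of_nonneg_left hc h2pos.le
                        _ ≤ (l v₁ s).1 • v₁ + (l v₁ s).2 • s :=
                            le_add_of_nonneg_left (smul_nonneg hll.1 hp₁.le)
                · exact ⟨0, Set.mem_union_right _ rfl, lam, ha, hb, by
                    rwa [Set.mem_singleton_iff.1 hs0] at hc⟩
            · rcases hB₂.2 with h₂ | ⟨-, h₂⟩
              · obtain ⟨v₂, hv₂, hp₂⟩ := h₂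
                refine Or.inr ⟨hn0, fun u hu => ?_⟩
                obtain ⟨s, hs, lam, ha, hb, hc⟩ := h₁ u hu
                rcases hs with hsB | hs0
                · have hll := hl s hsB v₂ hv₂
                  by_cases h10 : (l s v₂).1 = 0
                  · exfalso
                    apply hpos
                    refine ⟨(l s v₂).1 • s + (l s v₂).2 • v₂, ⟨s, hsB, v₂, hv₂, rfl⟩, ?_⟩
                    rw [h10, zero_smul, zero_add]
                    have h2pos : 0 < (l s v₂).2 := by
                      have := hll.2.2; rw [h10, zero_add] at this; exact this
                    exact smul_pos_pi h2pos hp₂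
                  · have h1pos : 0 < (l s v₂).1 := lt_of_le_of_ne hll.1 (Ne.symm h10)
                    refine ⟨(l s v₂).1 • s + (l s v₂).2 • v₂,
                      Set.mem_union_left _ ⟨s, hsB, v₂, hv₂, rfl⟩,
                      fun j => (l s v₂).1 * lam j,
                      fun j => mul_nonneg h1pos.le (ha j), ?_, ?_⟩
                    · rw [← Finset.mul_sum]
                      exact mul_pos h1pos hb
                    · have he : (∑ j, ((l s v₂).1 * lam j) • u j)
                          = (l s v₂).1 • ∑ j, lam j • u j := by
                        rw [Finset.smul_sum]
                        exact Finset.sum_congr rfl fun j _ => (mul_smul _ _ _)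
                      rw [he]
                      calc (l s v₂).1 • ∑ j, lam j • u j ≤ (l s v₂).1 • s :=
                            smul_le_smul_of_nonneg_left hc h1pos.le
                        _ ≤ (l s v₂).1 • s + (l s v₂).2 • v₂ :=
                            le_add_of_nonneg_right (smul_nonneg hll.2.1 hp₂.le)
                · exact ⟨0, Set.mem_union_right _ rfl, lam, ha, hb, by
                    rwa [Set.mem_singleton_iff.1 hs0] at hc⟩
              · refine Or.inr ⟨hn0, fun u hu => ?_⟩
                obtain ⟨s₁, hs₁, lam₁, ha₁, hb₁, hc₁⟩ := h₁ u hu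
                obtain ⟨s₂, hs₂, lam₂, ha₂, hb₂, hc₂⟩ := h₂ u hu
                rcases hs₁ with hs₁B | hs₁0
                · rcases hs₂ with hs₂B | hs₂0
                  · have hll := hl s₁ hs₁B s₂ hs₂B
                    refine ⟨(l s₁ s₂).1 • s₁ + (l s₁ s₂).2 • s₂,
                      Set.mem_union_left _ ⟨s₁, hs₁B, s₂, hs₂B, rfl⟩,
                      fun j => (l s₁ s₂).1 * lam₁ j + (l s₁ s₂).2 * lam₂ j,
                      fun j => add_nonneg (mul_nonneg hll.1 (ha₁ j))
                        (mul_nonneg hll.2.1 (ha₂ j)), ?_, ?_⟩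
                    · rw [Finset.sum_add_distrib, ← Finset.mul_sum, ← Finset.mul_sum]
                      have hor : 0 < (l s₁ s₂).1 ∨ 0 < (l s₁ s₂).2 := by
                        by_contra hcon
                        push_neg at hcon
                        have e1 : (l s₁ s₂).1 = 0 := le_antisymm hcon.1 hll.1
                        have e2 : (l s₁ s₂).2 = 0 := le_antisymm hcon.2 hll.2.1
                        have := hll.2.2
                        rw [e1, e2, add_zero] at this
                        exact lt_irrefl _ this
                      rcases hor with h | h
                      · exact add_pos_of_pos_of_nonneg (mul_pos h hb₁)
                          (mul_nonneg hll.2.1 hb₂.le)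
                      · exact add_pos_of_nonneg_of_pos (mul_nonneg hll.1 hb₁.le)
                          (mul_pos h hb₂)
                    · have he : (∑ j, ((l s₁ s₂).1 * lam₁ j + (l s₁ s₂).2 * lam₂ j) • u j)
                          = (l s₁ s₂).1 • (∑ j, lam₁ j • u j)
                            + (l s₁ s₂).2 • (∑ j, lam₂ j • u j) := by
                        rw [Finset.smul_sum, Finset.smul_sum, ← Finset.sum_add_distrib]
                        exact Finset.sum_congr rfl fun j _ => by
                          rw [add_smul, mul_smul, mul_smul]
                      rw [he]
                      exact add_le_add (smul_le_smul_of_nonneg_left hc₁ hll.1)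
                        (smul_le_smul_of_nonneg_left hc₂ hll.2.1)
                  · exact ⟨0, Set.mem_union_right _ rfl, lam₂, ha₂, hb₂, by
                      rwa [Set.mem_singleton_iff.1 hs₂0] at hc₂⟩
                · exact ⟨0, Set.mem_union_right _ rfl, lam₁, ha₁, hb₁, by
                    rwa [Set.mem_singleton_iff.1 hs₁0] at hc₁⟩
        · -- K4
          intro B hB B' hB'
          refine ⟨hB.1.union hB', ?_⟩
          rcases hB.2 with ⟨v, hv, hvpos⟩ | ⟨hn0, h2⟩
          · exact Or.inl ⟨v, Set.mem_union_left _ hv, hvpos⟩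
          · right
            refine ⟨hn0, fun u hu => ?_⟩
            obtain ⟨s, hs, lam, h1, h2', h3⟩ := h2 u hu
            rcases hs with hsB | hs0
            · exact ⟨s, Set.mem_union_left _ (Set.mem_union_left _ hsB), lam, h1, h2', h3⟩
            · exact ⟨s, Set.mem_union_right _ hs0, lam, h1, h2', h3⟩
      have h𝒜 : {B | ∃ j : Fin n, B = A j} ⊆ Kstar := by
        rintro B ⟨j, rfl⟩
        refine ⟨hA j, Or.inr ⟨fun h0 => (h0 ▸ j).elim0, fun u hu => ?_⟩⟩
        refine ⟨u j, Set.mem_union_left _ (hu j), fun k => if k = j then 1 else 0, ?_, ?_, ?_⟩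
        · intro k; dsimp only; split <;> norm_num
        · simp
        · simp [ite_smul]
      have hmem := hall Kstar hco h𝒜
      exact hmem.2
  · -- Backward direction
    intro h
    refine ⟨hS, fun K hK h𝒜 => ?_⟩
    rcases h with ⟨v, hvS, hv⟩ | ⟨hn0, hdom⟩
    · have h1 : {v} ∈ K := hK.2.2.2.1 v hv
      have h2 := hK.2.2.2.2.2 {v} h1 S hS
      rwa [Set.union_eq_self_of_subset_left (Set.singleton_subset_iff.2 hvS)] at h2
    · have hAK : ∀ j, A j ∈ K := fun j => h𝒜 ⟨j, rfl⟩
      have hchoice : ∀ u : Fin n → X → ℝ, ∃ slam : (X → ℝ) × (Fin n → ℝ),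
          ((∀ j, u j ∈ A j) → (slam.1 ∈ S ∪ {0} ∧ (∀ j, 0 ≤ slam.2 j) ∧
            0 < ∑ j, slam.2 j ∧ ∑ j, slam.2 j • u j ≤ slam.1)) := by
        intro u
        by_cases hu : ∀ j, u j ∈ A j
        · obtain ⟨s, hs, lam, h1, h2, h3⟩ := hdom u hu
          exact ⟨(s, lam), fun _ => ⟨hs, h1, h2, h3⟩⟩
        · exact ⟨(0, fun _ => 1), fun h => absurd h hu⟩
      choose F hF using hchoice
      have hΛ : ∀ u, (∀ j, u j ∈ A j) → (∀ j, 0 ≤ (F u).2 j) ∧ 0 < ∑ j, (F u).2 j :=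
        fun u hu => ⟨(hF u hu).2.1, (hF u hu).2.2.1⟩
      have hD : {w | ∃ u, (∀ j, u j ∈ A j) ∧ w = ∑ j, (F u).2 j • u j} ∈ K :=
        posiK hK n A hA hAK (fun u => (F u).2) hΛ
      set D := {w | ∃ u, (∀ j, u j ∈ A j) ∧ w = ∑ j, (F u).2 j • u j} with hDdef
      have hDfin : D.Finite := Dset_finite hA _
      set g : (X → ℝ) → (X → ℝ) := fun d =>
        if h : ∃ u, (∀ j, u j ∈ A j) ∧ d = ∑ j, (F u).2 j • u j
        then (F h.choose).1 else d with hgdef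
      have hgd : ∀ d, d ∈ D → d ≤ g d ∧ g d ∈ S ∪ {0} := by
        intro d hd
        have hd' : ∃ u, (∀ j, u j ∈ A j) ∧ d = ∑ j, (F u).2 j • u j := hd
        have hge : g d = (F hd'.choose).1 := by simp only [hgdef, dif_pos hd']
        obtain ⟨hu, he⟩ := hd'.choose_spec
        have h2 := hF hd'.choose hu
        rw [hge]
        exact ⟨he.trans_le h2.2.2.2, h2.1⟩
      have key : ∀ Fi : Finset (X → ℝ), ↑Fi ⊆ D → ((D \ ↑Fi) ∪ g '' ↑Fi) ∈ K := by
        intro Fi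
        induction Fi using Finset.induction_on with
        | empty =>
          intro _
          simpa using hD
        | @insert d₀ Fi hd₀Fi ihF =>
          intro hsub
          have hd₀D : d₀ ∈ D := hsub (by simp)
          have hFiD : ↑Fi ⊆ D := fun x hx => hsub (by
            simp only [Finset.coe_insert, Set.mem_insert_iff]
            exact Or.inr hx)
          have hW := ihF hFiD
          obtain ⟨hle, hmem⟩ := hgd d₀ hd₀D
          by_cases heq : g d₀ = d₀
          · have hsame : ((D \ ↑(insert d₀ Fi)) ∪ g '' ↑(insert d₀ Fi))
                = ((D \ ↑Fi) ∪ g '' ↑Fi) := by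
              rw [Finset.coe_insert, Set.image_insert_eq, heq]
              ext v
              simp only [Set.mem_union, Set.mem_diff, Set.mem_insert_iff, Finset.mem_coe]
              constructor
              · rintro (⟨hvD, hv⟩ | (rfl | hv))
                · exact Or.inl ⟨hvD, fun hvF => hv (Or.inr hvF)⟩
                · exact Or.inl ⟨hd₀D, hd₀Fi⟩
                · exact Or.inr hv
              · rintro (⟨hvD, hv⟩ | hv)
                · by_cases hvd : v = d₀
                  · exact Or.inr (Or.inl hvd)
                  · refine Or.inl ⟨hvD, ?_⟩
                    rintro (h | h)
                    · exact hvd h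
                    · exact hv h
                · exact Or.inr (Or.inr hv)
            rw [hsame]
            exact hW
          · have hlt : (0 : X → ℝ) < g d₀ - d₀ :=
              pi_pos_of (by rwa [sub_nonneg]) (sub_ne_zero_of_ne heq)
            have hwK : {g d₀ - d₀} ∈ K := hK.2.2.2.1 _ hlt
            set lrep : (X → ℝ) → (X → ℝ) → ℝ × ℝ :=
              fun z _ => (1, if z = d₀ then 1 else 0) with hlrep
            have hcond : ∀ a ∈ (D \ ↑Fi) ∪ g '' ↑Fi, ∀ b ∈ ({g d₀ - d₀} : Set (X → ℝ)),
                0 ≤ (lrep a b).1 ∧ 0 ≤ (lrep a b).2 ∧ 0 < (lrep a b).1 + (lrep a b).2 := by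
              intro a _ b _
              refine ⟨zero_le_one, ?_, ?_⟩ <;> simp only [hlrep] <;> split <;> norm_num
            have hO := hK.2.2.2.2.1 _ hW _ hwK lrep hcond
            have hOsub : {w | ∃ a ∈ (D \ ↑Fi) ∪ g '' ↑Fi,
                ∃ b ∈ ({g d₀ - d₀} : Set (X → ℝ)),
                w = (lrep a b).1 • a + (lrep a b).2 • b} ⊆
                (D \ ↑(insert d₀ Fi)) ∪ g '' ↑(insert d₀ Fi) := by
              rintro w ⟨z, hz, y, hy, rfl⟩
              rw [Set.mem_singleton_iff.1 hy]
              by_cases hzd : z = d₀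
              · have he : (lrep z (g d₀ - d₀)).1 • z + (lrep z (g d₀ - d₀)).2 • (g d₀ - d₀)
                    = g d₀ := by
                  simp only [hlrep, if_pos hzd]
                  rw [one_smul, one_smul, hzd]
                  abel
                rw [he]
                right
                exact ⟨d₀, by simp, rfl⟩
              · have he : (lrep z (g d₀ - d₀)).1 • z + (lrep z (g d₀ - d₀)).2 • (g d₀ - d₀)
                    = z := by
                  simp only [hlrep, if_neg hzd]
                  rw [one_smul, zero_smul, add_zero]
                rw [he]
                rcases hz with ⟨hzD, hzF⟩ | hzim
                · left
                  refine ⟨hzD, ?_⟩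
                  simp only [Finset.coe_insert, Set.mem_insert_iff]
                  rintro (h | h)
                  · exact hzd h
                  · exact hzF h
                · right
                  refine Set.image_mono ?_ hzim
                  intro x hx
                  simp only [Finset.coe_insert, Set.mem_insert_iff]
                  exact Or.inr hx
            have hfin2 : ((D \ ↑(insert d₀ Fi)) ∪ g '' ↑(insert d₀ Fi)).Finite :=
              Set.Finite.union (hDfin.diff) (((insert d₀ Fi).finite_toSet).image g)
            have hfinal := hK.2.2.2.2.2 _ hO _ hfin2
            rwa [Set.union_eq_self_of_subset_left hOsub] at hfinal
      have hfin3 := key hDfin.toFinset (by simp)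
      rw [Set.Finite.coe_toFinset, Set.diff_self, Set.empty_union] at hfin3
      have himg := hK.2.1 _ hfin3
      have hsub4 : (g '' D) \ {0} ⊆ S := by
        rintro v ⟨⟨d, hd, rfl⟩, hv0⟩
        rcases (hgd d hd).2 with h | h
        · exact h
        · exact absurd h hv0
      have hfinal := hK.2.2.2.2.2 _ himg S hS
      rwa [Set.union_eq_self_of_subset_left hsub4] at hfinal
end

section
/- Let A be a finite option set and u, v ∈ A with u ≠ v and u ≤ μv for some real μ ≥ 0. Then for every coherent set of desirable option sets K: A ∈ K if and only if A \ {u} ∈ K. (Hence the assessments {A} and {A \ {u}} are equivalent.) -/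
open scoped BigOperators

variable {X : Type*}

/-- If u, v ∈ A are distinct and u ≤ μv for some μ ≥ 0, then for every coherent set of
desirable option sets K: A ∈ K iff A \ {u} ∈ K. -/
theorem stmt_16 {X : Type*} (A : Set (X → ℝ)) (hA : A.Finite)
    (u v : X → ℝ) (hu : u ∈ A) (hv : v ∈ A) (huv : u ≠ v)
    (μ : ℝ) (hμ : 0 ≤ μ) (hle : u ≤ μ • v) :
    ∀ K : Set (Set (X → ℝ)), CoherentK K → (A ∈ K ↔ A \ {u} ∈ K) := by
  classical
  intro K hK
  obtain ⟨hfin, hK0, hK1, hK2, hK3, hK4⟩ := hK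
  have hfinAu : (A \ {u}).Finite := hA.diff
  constructor
  · intro hAK
    have finish : ∀ S ∈ K, S ⊆ insert 0 (A \ {u}) → A \ {u} ∈ K := by
      intro S hS hsub
      have h1 : S \ {0} ∈ K := hK0 S hS
      have h2 := hK4 _ h1 (A \ {u}) hfinAu
      have heq : (S \ {0}) ∪ (A \ {u}) = A \ {u} := by
        apply Set.union_eq_self_of_subset_left
        intro s hs
        rcases hsub hs.1 with h | h
        · exact absurd h hs.2
        · exact h
      rwa [heq] at h2
    have hvAu : v ∈ A \ {u} := ⟨hv, fun h => huv (Set.mem_singleton_iff.mp h).symm⟩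
    by_cases hu0 : u = 0
    · subst hu0; exact hK0 A hAK
    by_cases hw : μ • v - u = 0
    · -- u = μ • v with μ ≠ 0
      have hue : u = μ • v := (sub_eq_zero.mp hw).symm
      have hμ0 : μ ≠ 0 := by
        rintro rfl
        rw [zero_smul] at hue
        exact hu0 hue
      have hμpos : 0 < μ := lt_of_le_of_ne hμ (Ne.symm hμ0)
      set l : (X → ℝ) → (X → ℝ) → ℝ × ℝ :=
        fun a b => if a = u ∧ b = u then (1/(2*μ), 1/(2*μ))
          else if a = u then ((0:ℝ), (1:ℝ)) else ((1:ℝ), (0:ℝ)) with hl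
      have hpos : ∀ a ∈ A, ∀ b ∈ A,
          0 ≤ (l a b).1 ∧ 0 ≤ (l a b).2 ∧ 0 < (l a b).1 + (l a b).2 := by
        intro a _ b _
        simp only [hl]
        split_ifs
        · exact ⟨by positivity, by positivity, by positivity⟩
        · norm_num
        · norm_num
      have hS := hK3 A hAK A hAK l hpos
      apply finish _ hS
      rintro s ⟨a, ha, b, hb, rfl⟩
      by_cases hab : a = u ∧ b = u
      · right
        have hlab : l a b = (1/(2*μ), 1/(2*μ)) := by simp [hl, hab]
        rw [hlab, hab.1, hab.2]
        show (1/(2*μ)) • u + (1/(2*μ)) • u ∈ A \ {u}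
        have key : (1/(2*μ)) • u + (1/(2*μ)) • u = v := by
          rw [hue, smul_smul, ← add_smul,
            show 1/(2*μ)*μ + 1/(2*μ)*μ = 1 by field_simp; ring, one_smul]
        rw [key]
        exact hvAu
      · by_cases hau : a = u
        · right
          have hbu : ¬ b = u := fun h => hab ⟨hau, h⟩
          have hlab : l a b = ((0:ℝ), (1:ℝ)) := by simp [hl, hau, hbu]
          rw [hlab]
          show (0:ℝ) • a + (1:ℝ) • b ∈ A \ {u}
          rw [zero_smul, one_smul, zero_add]
          exact ⟨hb, by simpa using hbu⟩
        · right
          have hlab : l a b = ((1:ℝ), (0:ℝ)) := by simp [hl, hau]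
          rw [hlab]
          show (1:ℝ) • a + (0:ℝ) • b ∈ A \ {u}
          rw [one_smul, zero_smul, add_zero]
          exact ⟨ha, by simpa using hau⟩
    · -- w := μ • v - u > 0
      have hwpos : (0 : X → ℝ) < μ • v - u :=
        lt_of_le_of_ne (sub_nonneg.mpr hle) (Ne.symm hw)
      have hwK : {μ • v - u} ∈ K := hK2 _ hwpos
      set c : ℝ := if μ = 0 then 1 else 1/μ with hc
      have hcpos : 0 < c := by
        rw [hc]; split_ifs with h
        · norm_num
        · exact by positivity
      set l : (X → ℝ) → (X → ℝ) → ℝ × ℝ :=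
        fun a _ => if a = u then (c, c) else ((1:ℝ), (0:ℝ)) with hl
      have hpos : ∀ a ∈ A, ∀ b ∈ ({μ • v - u} : Set (X → ℝ)),
          0 ≤ (l a b).1 ∧ 0 ≤ (l a b).2 ∧ 0 < (l a b).1 + (l a b).2 := by
        intro a _ b _
        simp only [hl]
        split_ifs
        · exact ⟨hcpos.le, hcpos.le, by positivity⟩
        · norm_num
      have hS := hK3 A hAK _ hwK l hpos
      apply finish _ hS
      rintro s ⟨a, ha, b, hb, rfl⟩
      have hb' : b = μ • v - u := hb
      by_cases hau : a = u
      · have hlab : l a b = (c, c) := by simp [hl, hau]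
        rw [hlab, hb', hau]
        show c • u + c • (μ • v - u) ∈ insert 0 (A \ {u})
        have hsum : c • u + c • (μ • v - u) = c • (μ • v) := by
          rw [← smul_add]
          congr 1
          abel
        rw [hsum]
        by_cases hμ0 : μ = 0
        · left; simp [hμ0]
        · right
          have hcv : c • (μ • v) = v := by
            rw [hc, if_neg hμ0, smul_smul, one_div, inv_mul_cancel₀ hμ0, one_smul]
          rw [hcv]
          exact hvAu
      · right
        have hlab : l a b = ((1:ℝ), (0:ℝ)) := by simp [hl, hau]
        rw [hlab]
        show (1:ℝ) • a + (0:ℝ) • b ∈ A \ {u}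
        rw [one_smul, zero_smul, add_zero]
        exact ⟨ha, by simpa using hau⟩
  · intro h
    have := hK4 _ h {u} (Set.finite_singleton u)
    have heq : (A \ {u}) ∪ {u} = A := by
      rw [Set.diff_union_self, Set.union_eq_self_of_subset_right (by simpa using hu)]
    rwa [heq] at this
end

section
/- If two assessments 𝒜₁ and 𝒜₂ are equivalent (they have the same collection of coherent supersets) and 𝒜₁ ⊆ 𝒜, then 𝒜 is equivalent to (𝒜 \ 𝒜₁) ∪ 𝒜₂. -/
open scoped BigOperators

variable {X : Type*}

/-- Replacing an equivalent part of an assessment yields an equivalent assessment: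
if 𝒜₁ and 𝒜₂ are equivalent and 𝒜₁ ⊆ 𝒜, then 𝒜 is equivalent to (𝒜 \ 𝒜₁) ∪ 𝒜₂. -/
theorem stmt_18 {X : Type*} (𝒜 𝒜₁ 𝒜₂ : Set (Set (X → ℝ)))
    (hequiv : ∀ K : Set (Set (X → ℝ)), CoherentK K → (𝒜₁ ⊆ K ↔ 𝒜₂ ⊆ K))
    (hsub : 𝒜₁ ⊆ 𝒜) :
    ∀ K : Set (Set (X → ℝ)), CoherentK K → (𝒜 ⊆ K ↔ (𝒜 \ 𝒜₁) ∪ 𝒜₂ ⊆ K) := by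
  intro K hK
  constructor
  · intro hA
    refine Set.union_subset ((Set.diff_subset).trans hA) ?_
    exact (hequiv K hK).mp (hsub.trans hA)
  · intro h
    have h2 : 𝒜₂ ⊆ K := (Set.union_subset_iff.mp h).2
    have h1 : 𝒜₁ ⊆ K := (hequiv K hK).mpr h2
    intro x hx
    by_cases hx1 : x ∈ 𝒜₁
    · exact h1 hx1
    · exact h (Or.inl ⟨hx, hx1⟩)
end

section
/- Let 𝒜 = {A₁,...,Aₙ} be a finite assessment (n ≥ 1). For every P₁ ∈ Posi(𝒜) there exists P₂ ∈ Posi'(A₁,...,Aₙ) with P₂ ⊆ P₁, where Posi(𝒜) is the set of all sets of the form {λ(u)·u : u ∈ B₁×···×Bₘ} for m ≥ 1, B₁,...,Bₘ ∈ 𝒜, and λ mapping each tuple u to an m-tuple of nonnegative reals with positive sum (λ(u)·u = Σ λₖ(u)uₖ), and Posi'(A₁,...,Aₙ) is the set of all sets of the form {λ(u)·u : u ∈ A₁×···×Aₙ} with λ mapping tuples to n-tuples of nonnegative reals with positive sum. -/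
open scoped BigOperators

/-- For a finite assessment 𝒜 = {A₁,…,Aₙ} (n ≥ 1): every P₁ ∈ Posi(𝒜) contains some
P₂ ∈ Posi'(A₁,…,Aₙ), where Posi-sets are sets of positive linear combinations
{λ(u)·u : u ∈ B₁×···×Bₘ} over finite sequences of members of 𝒜. -/
theorem stmt_19 {V : Type*} [AddCommGroup V] [Module ℝ V] {n : ℕ} (hn : 1 ≤ n)
    (A : Fin n → Set V) (hA : ∀ j, (A j).Finite) (P₁ : Set V)
    (hP₁ : ∃ m : ℕ, 1 ≤ m ∧ ∃ B : Fin m → Set V, (∀ k, ∃ j : Fin n, B k = A j) ∧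
      ∃ l : (Fin m → V) → (Fin m → ℝ),
        (∀ u : Fin m → V, (∀ k, u k ∈ B k) → (∀ k, 0 ≤ l u k) ∧ 0 < ∑ k, l u k) ∧
        P₁ = {w | ∃ u : Fin m → V, (∀ k, u k ∈ B k) ∧ w = ∑ k, l u k • u k}) :
    ∃ P₂ : Set V, P₂ ⊆ P₁ ∧
      ∃ l : (Fin n → V) → (Fin n → ℝ),
        (∀ u : Fin n → V, (∀ j, u j ∈ A j) → (∀ j, 0 ≤ l u j) ∧ 0 < ∑ j, l u j) ∧
        P₂ = {w | ∃ u : Fin n → V, (∀ j, u j ∈ A j) ∧ w = ∑ j, l u j • u j} := by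
  obtain ⟨m, hm, B, hB, l, hl, hPeq⟩ := hP₁
  choose φ hφ using hB
  set l' : (Fin n → V) → (Fin n → ℝ) := fun u j =>
    ∑ k ∈ Finset.univ.filter (fun k => φ k = j), l (fun k => u (φ k)) k with hl'
  refine ⟨{w | ∃ u : Fin n → V, (∀ j, u j ∈ A j) ∧ w = ∑ j, l' u j • u j}, ?_, l', ?_, rfl⟩
  · rintro w ⟨u, hu, rfl⟩
    rw [hPeq]
    refine ⟨fun k => u (φ k), fun k => by rw [hφ k]; exact hu (φ k), ?_⟩
    rw [← Finset.sum_fiberwise Finset.univ φ (fun k => l (fun k => u (φ k)) k • u (φ k))]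
    apply Finset.sum_congr rfl
    intro j _
    rw [hl', Finset.sum_smul]
    apply Finset.sum_congr rfl
    intro k hk
    rw [Finset.mem_filter] at hk
    rw [hk.2]
  · intro u hu
    have huphi : ∀ k, u (φ k) ∈ B k := fun k => by rw [hφ k]; exact hu (φ k)
    obtain ⟨h1, h2⟩ := hl (fun k => u (φ k)) huphi
    constructor
    · intro j
      exact Finset.sum_nonneg fun k _ => h1 k
    · have : ∑ j, l' u j = ∑ k, l (fun k => u (φ k)) k :=
        Finset.sum_fiberwise Finset.univ φ (fun k => l (fun k => u (φ k)) k)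
      rw [this]
      exact h2
end
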